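/- arXiv:2310.13881 — 5 statements merged into one kernel-verified Lean document; each statement's English description precedes it below -/
import Mathlib

section
/- Let 𝒳₁, 𝒳₂, 𝒵 be finite sets, let W(z|x₁,x₂) be a channel (a pmf on 𝒵 for each (x₁,x₂) ∈ 𝒳₁×𝒳₂), let P_{X₁}, P_{X₂} be pmfs on 𝒳₁, 𝒳₂, and let L₁, L₂ be positive integers. Let the random codebook 𝒞 = ((X_{1,1},…,X_{1,L₁}),(X_{2,1},…,X_{2,L₂})) consist of mutually independent codewords with X_{i,j} distributed according to P_{X_i}. Define P_{Z|𝒞}(z) := (1/(L₁L₂)) ∑_{j₁=1}^{L₁} ∑_{j₂=1}^{L₂} W(z|X_{1,j₁},X_{2,j₂}) and P_Z(z) := ∑_{x₁,x₂} P_{X₁}(x₁)P_{X₂}(x₂)W(z|x₁,x₂), and assume P_Z(z) > 0 for every z ∈ 𝒵. Then for every s ∈ (0,1], s · E_𝒞[ D_{1+s}(P_{Z|𝒞} ‖ P_Z) ] ≤ ∑_{∅≠S⊆{1,2}} (∏_{i∈S} L_i)^{−s} · exp( s · I↓_{1+s}(Z; X_S) ), where for S ⊆ {1,2}, P_{X_S}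 := ∏_{i∈S} P_{X_i}, P_{Z X_S}(z, x_S) := ∑_{x_i : i∉S} (∏_{i=1}^{2} P_{X_i}(x_i)) W(z|x₁,x₂) with the coordinates in S fixed to x_S, and I↓_{1+s}(Z; X_S) := D_{1+s}(P_{Z X_S} ‖ P_Z × P_{X_S}). -/
open scoped BigOperators

/-- Rényi relative entropy of order `1+s`:
`D_{1+s}(P‖Q) = (1/s) log ∑_x P(x)^{1+s} Q(x)^{-s}` (terms with `P x = 0` contribute `0`
since `0 ^ (1+s) = 0` for `s > 0`). -/
noncomputable def renyiD {α : Type*} [Fintype α] (s : ℝ) (P Q : α → ℝ) : ℝ :=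
  (1 / s) * Real.log (∑ x, P x ^ (1 + s) * Q x ^ (-s))


open Finset

private lemma resolv_sum_prod {ι X : Type*} [Fintype ι] [DecidableEq ι] [Fintype X]
    {P : X → ℝ} (h1 : ∑ x, P x = 1) :
    ∑ f : ι → X, ∏ i, P (f i) = (1 : ℝ) := by
  have h := (Fintype.prod_sum (fun (_ : ι) (x : X) => P x)).symm
  simpa [h1] using h

private lemma resolv_prod_split {ι X : Type*} [Fintype ι] [DecidableEq ι]
    (P : X → ℝ) (i0 : ι) (f : ι → X) :
    ∏ i, P (f i) = P (f i0) * ∏ j : { j // j ≠ i0 }, P (f j.1) := by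
  rw [← Finset.mul_prod_erase univ _ (Finset.mem_univ i0)]
  congr 1
  exact Finset.prod_subtype (univ.erase i0) (fun j => by simp) (fun i => P (f i))

private lemma resolv_split {ι X : Type*} [Fintype ι] [DecidableEq ι] [Fintype X]
    (P : X → ℝ) (i0 : ι) (F : X → ℝ) (G : ({ j // j ≠ i0 } → X) → ℝ) :
    ∑ f : ι → X, (∏ i, P (f i)) * (F (f i0) * G (fun j => f j.1))
      = (∑ x, P x * F x) * ∑ D : { j // j ≠ i0 } → X, (∏ j, P (D j)) * G D := by
  classical
  calc ∑ f : ι → X, (∏ i, P (f i)) * (F (f i0) * G (fun j => f j.1))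
      = ∑ p : X × ({ j // j ≠ i0 } → X),
          (P p.1 * F p.1) * ((∏ j, P (p.2 j)) * G p.2) := by
        refine Fintype.sum_equiv (Equiv.funSplitAt i0 X) _ _ (fun f => ?_)
        simp only [Equiv.funSplitAt_apply, Equiv.piSplitAt_apply]
        rw [resolv_prod_split P i0 f]
        ring
    _ = (∑ x, P x * F x) * ∑ D : { j // j ≠ i0 } → X, (∏ j, P (D j)) * G D := by
        rw [Fintype.sum_prod_type, Finset.sum_mul_sum]

private lemma resolv_eval {ι X : Type*} [Fintype ι] [DecidableEq ι] [Fintype X]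
    {P : X → ℝ} (h1 : ∑ x, P x = 1) (i0 : ι) (g : X → ℝ) :
    ∑ f : ι → X, (∏ i, P (f i)) * g (f i0) = ∑ x, P x * g x := by
  have h := resolv_split P i0 g (fun _ => (1 : ℝ))
  simpa [resolv_sum_prod (ι := { j // j ≠ i0 }) h1] using h

private lemma resolv_jensen {ι : Type*} [Fintype ι] {s : ℝ} (hs0 : 0 < s) (hs1 : s ≤ 1)
    (w a : ι → ℝ) (hw : ∀ i, 0 ≤ w i) (hw1 : ∑ i, w i = 1) (ha : ∀ i, 0 ≤ a i) :
    ∑ i, w i * a i ^ s ≤ (∑ i, w i * a i) ^ s := by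
  have hp : (1 : ℝ) ≤ 1 / s := by
    rw [le_div_iff₀ hs0]; linarith
  have h := Real.arith_mean_le_rpow_mean univ w (fun i => a i ^ s)
    (fun i _ => hw i) hw1 (fun i _ => Real.rpow_nonneg (ha i) s) hp
  have key : ∀ i : ι, (a i ^ s) ^ (1 / s) = a i := by
    intro i
    rw [← Real.rpow_mul (ha i), mul_one_div, div_self hs0.ne', Real.rpow_one]
  simp only [key, one_div_one_div] at h
  exact h

private lemma resolv_jensen_log {ι : Type*} [Fintype ι]
    (w a : ι → ℝ) (hw : ∀ i, 0 ≤ w i) (hw1 : ∑ i, w i = 1) (ha : ∀ i, 0 < a i) :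
    ∑ i, w i * Real.log (a i) ≤ Real.log (∑ i, w i * a i) := by
  have h := strictConcaveOn_log_Ioi.concaveOn.le_map_sum (t := univ) (w := w) (p := a)
    (fun i _ => hw i) hw1 (fun i _ => ha i)
  simpa [smul_eq_mul] using h

private lemma resolv_rpow_add_le {s : ℝ} (hs0 : 0 ≤ s) (hs1 : s ≤ 1)
    {x y : ℝ} (hx : 0 ≤ x) (hy : 0 ≤ y) : (x + y) ^ s ≤ x ^ s + y ^ s := by
  have h := NNReal.rpow_add_le_add_rpow x.toNNReal y.toNNReal hs0 hs1
  rw [← Real.toNNReal_add hx hy] at h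
  have h2 := NNReal.coe_le_coe.2 h
  rw [NNReal.coe_add] at h2
  simpa [← Real.rpow_natCast, NNReal.coe_rpow, Real.coe_toNNReal x hx,
    Real.coe_toNNReal y hy, Real.coe_toNNReal _ (add_nonneg hx hy)] using h2

private lemma resolv_eval2 {ι1 ι2 α β : Type*} [Fintype ι1] [DecidableEq ι1]
    [Fintype ι2] [DecidableEq ι2] [Fintype α] [Fintype β]
    {P1 : α → ℝ} {P2 : β → ℝ} (h11 : ∑ x, P1 x = 1) (h21 : ∑ x, P2 x = 1)
    (i1 : ι1) (i2 : ι2) (h : α → β → ℝ) :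
    ∑ p : (ι1 → α) × (ι2 → β),
        ((∏ i, P1 (p.1 i)) * (∏ i, P2 (p.2 i))) * h (p.1 i1) (p.2 i2)
      = ∑ x1, ∑ x2, (P1 x1 * P2 x2) * h x1 x2 := by
  rw [Fintype.sum_prod_type]
  have inner : ∀ C1 : ι1 → α,
      ∑ C2 : ι2 → β, ((∏ i, P1 (C1 i)) * (∏ i, P2 (C2 i))) * h (C1 i1) (C2 i2)
        = (∏ i, P1 (C1 i)) * ∑ x2, P2 x2 * h (C1 i1) x2 := by
    intro C1
    rw [← resolv_eval h21 i2 (fun x2 => h (C1 i1) x2), Finset.mul_sum]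
    exact Finset.sum_congr rfl (fun C2 _ => by ring)
  calc ∑ C1 : ι1 → α, ∑ C2 : ι2 → β,
        ((∏ i, P1 (C1 i)) * (∏ i, P2 (C2 i))) * h (C1 i1) (C2 i2)
      = ∑ C1 : ι1 → α, (∏ i, P1 (C1 i)) * ∑ x2, P2 x2 * h (C1 i1) x2 :=
        Finset.sum_congr rfl (fun C1 _ => inner C1)
    _ = ∑ x1, P1 x1 * ∑ x2, P2 x2 * h x1 x2 :=
        resolv_eval h11 i1 (fun x1 => ∑ x2, P2 x2 * h x1 x2)
    _ = ∑ x1, ∑ x2, (P1 x1 * P2 x2) * h x1 x2 := by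
        refine Finset.sum_congr rfl (fun x1 _ => ?_)
        rw [Finset.mul_sum]
        exact Finset.sum_congr rfl (fun x2 _ => by ring)

private lemma resolv_sigma2 {ι1 ι2 α β : Type*} [Fintype ι1] [DecidableEq ι1]
    [Fintype ι2] [DecidableEq ι2] [Fintype α] [Fintype β]
    {s : ℝ} (hs0 : 0 < s) (hs1 : s ≤ 1)
    (V : α → β → ℝ) (hV0 : ∀ a b, 0 ≤ V a b)
    (Pa : α → ℝ) (hPa0 : ∀ x, 0 ≤ Pa x) (hPa1 : ∑ x, Pa x = 1)
    (Pb : β → ℝ) (hPb0 : ∀ x, 0 ≤ Pb x) (hPb1 : ∑ x, Pb x = 1)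
    (j1 : ι1) (j2 : ι2) :
    ∑ p : (ι1 → α) × (ι2 → β),
        ((∏ i, Pa (p.1 i)) * (∏ i, Pb (p.2 i))) *
          (V (p.1 j1) (p.2 j2) * (∑ j2' : {j : ι2 // j ≠ j2}, V (p.1 j1) (p.2 j2'.1)) ^ s)
      ≤ (Fintype.card {j : ι2 // j ≠ j2} : ℝ) ^ s *
          ∑ a, Pa a * (∑ b, Pb b * V a b) ^ (1 + s) := by
  classical
  have h1sne : (1 : ℝ) + s ≠ 0 := by positivity
  have cardnn : (0 : ℝ) ≤ (Fintype.card {j : ι2 // j ≠ j2} : ℝ) := by positivity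
  have hmean : ∀ a : α, 0 ≤ ∑ b, Pb b * V a b :=
    fun a => Finset.sum_nonneg fun b _ => mul_nonneg (hPb0 b) (hV0 a b)
  have hwD0 : ∀ D : {j : ι2 // j ≠ j2} → β, 0 ≤ ∏ j, Pb (D j) :=
    fun D => Finset.prod_nonneg fun j _ => hPb0 _
  have key : ∀ C1 : ι1 → α,
      ∑ C2 : ι2 → β, (∏ i, Pb (C2 i)) *
          (V (C1 j1) (C2 j2) * (∑ j2' : {j : ι2 // j ≠ j2}, V (C1 j1) (C2 j2'.1)) ^ s)
        ≤ (∑ b, Pb b * V (C1 j1) b) *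
            ((Fintype.card {j : ι2 // j ≠ j2} : ℝ) ^ s * (∑ b, Pb b * V (C1 j1) b) ^ s) := by
    intro C1
    have hsplit : (∑ C2 : ι2 → β, (∏ i, Pb (C2 i)) *
          (V (C1 j1) (C2 j2) * (∑ j2' : {j : ι2 // j ≠ j2}, V (C1 j1) (C2 j2'.1)) ^ s))
        = (∑ b, Pb b * V (C1 j1) b) *
            ∑ D : {j : ι2 // j ≠ j2} → β, (∏ j, Pb (D j)) *
              (∑ j2' : {j : ι2 // j ≠ j2}, V (C1 j1) (D j2')) ^ s :=
      resolv_split Pb j2 (fun b => V (C1 j1) b)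
        (fun D => (∑ j2' : {j : ι2 // j ≠ j2}, V (C1 j1) (D j2')) ^ s)
    rw [hsplit]
    refine mul_le_mul_of_nonneg_left ?_ (hmean (C1 j1))
    have hJ : ∑ D : {j : ι2 // j ≠ j2} → β, (∏ j, Pb (D j)) *
          (∑ j2' : {j : ι2 // j ≠ j2}, V (C1 j1) (D j2')) ^ s
        ≤ (∑ D : {j : ι2 // j ≠ j2} → β, (∏ j, Pb (D j)) *
            ∑ j2' : {j : ι2 // j ≠ j2}, V (C1 j1) (D j2')) ^ s :=
      resolv_jensen hs0 hs1 _ _ hwD0 (resolv_sum_prod hPb1)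
        (fun D => Finset.sum_nonneg fun j2' _ => hV0 _ _)
    have hmean2 : ∑ D : {j : ι2 // j ≠ j2} → β, (∏ j, Pb (D j)) *
          ∑ j2' : {j : ι2 // j ≠ j2}, V (C1 j1) (D j2')
        = (Fintype.card {j : ι2 // j ≠ j2} : ℝ) * ∑ b, Pb b * V (C1 j1) b := by
      calc ∑ D : {j : ι2 // j ≠ j2} → β, (∏ j, Pb (D j)) *
            ∑ j2' : {j : ι2 // j ≠ j2}, V (C1 j1) (D j2')
          = ∑ D : {j : ι2 // j ≠ j2} → β, ∑ j2' : {j : ι2 // j ≠ j2},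
              (∏ j, Pb (D j)) * V (C1 j1) (D j2') :=
            Finset.sum_congr rfl fun D _ => Finset.mul_sum _ _ _
        _ = ∑ j2' : {j : ι2 // j ≠ j2}, ∑ D : {j : ι2 // j ≠ j2} → β,
              (∏ j, Pb (D j)) * V (C1 j1) (D j2') := Finset.sum_comm
        _ = ∑ _j2' : {j : ι2 // j ≠ j2}, ∑ b, Pb b * V (C1 j1) b :=
            Finset.sum_congr rfl fun j2' _ => resolv_eval hPb1 j2' (fun b => V (C1 j1) b)
        _ = (Fintype.card {j : ι2 // j ≠ j2} : ℝ) * ∑ b, Pb b * V (C1 j1) b := by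
            rw [Finset.sum_const, Finset.card_univ, nsmul_eq_mul]
    calc ∑ D : {j : ι2 // j ≠ j2} → β, (∏ j, Pb (D j)) *
          (∑ j2' : {j : ι2 // j ≠ j2}, V (C1 j1) (D j2')) ^ s
        ≤ ((Fintype.card {j : ι2 // j ≠ j2} : ℝ) * ∑ b, Pb b * V (C1 j1) b) ^ s := by
          rw [← hmean2]; exact hJ
      _ = (Fintype.card {j : ι2 // j ≠ j2} : ℝ) ^ s * (∑ b, Pb b * V (C1 j1) b) ^ s :=
          Real.mul_rpow cardnn (hmean (C1 j1))
  have hPaNN : ∀ C1 : ι1 → α, (0:ℝ) ≤ ∏ i, Pa (C1 i) :=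
    fun C1 => Finset.prod_nonneg fun i _ => hPa0 _
  calc ∑ p : (ι1 → α) × (ι2 → β),
        ((∏ i, Pa (p.1 i)) * (∏ i, Pb (p.2 i))) *
          (V (p.1 j1) (p.2 j2) * (∑ j2' : {j : ι2 // j ≠ j2}, V (p.1 j1) (p.2 j2'.1)) ^ s)
      = ∑ C1 : ι1 → α, (∏ i, Pa (C1 i)) *
          ∑ C2 : ι2 → β, (∏ i, Pb (C2 i)) *
            (V (C1 j1) (C2 j2) * (∑ j2' : {j : ι2 // j ≠ j2}, V (C1 j1) (C2 j2'.1)) ^ s) := by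
        rw [Fintype.sum_prod_type]
        exact Finset.sum_congr rfl fun C1 _ => by
          rw [Finset.mul_sum]; exact Finset.sum_congr rfl fun C2 _ => by ring
    _ ≤ ∑ C1 : ι1 → α, (∏ i, Pa (C1 i)) *
          ((∑ b, Pb b * V (C1 j1) b) *
            ((Fintype.card {j : ι2 // j ≠ j2} : ℝ) ^ s * (∑ b, Pb b * V (C1 j1) b) ^ s)) :=
        Finset.sum_le_sum fun C1 _ => mul_le_mul_of_nonneg_left (key C1) (hPaNN C1)
    _ = ∑ C1 : ι1 → α, (∏ i, Pa (C1 i)) *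
          ((Fintype.card {j : ι2 // j ≠ j2} : ℝ) ^ s * (∑ b, Pb b * V (C1 j1) b) ^ (1 + s)) :=
        Finset.sum_congr rfl fun C1 _ => by
          rw [Real.rpow_one_add' (hmean (C1 j1)) h1sne]; ring
    _ = ∑ a, Pa a * ((Fintype.card {j : ι2 // j ≠ j2} : ℝ) ^ s * (∑ b, Pb b * V a b) ^ (1 + s)) :=
        resolv_eval hPa1 j1
          (fun a => (Fintype.card {j : ι2 // j ≠ j2} : ℝ) ^ s * (∑ b, Pb b * V a b) ^ (1 + s))
    _ = (Fintype.card {j : ι2 // j ≠ j2} : ℝ) ^ s * ∑ a, Pa a * (∑ b, Pb b * V a b) ^ (1 + s) := by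
        rw [Finset.mul_sum]; exact Finset.sum_congr rfl fun a _ => by ring

private lemma resolv_sigma4 {ι1 ι2 α β : Type*} [Fintype ι1] [DecidableEq ι1]
    [Fintype ι2] [DecidableEq ι2] [Fintype α] [Fintype β]
    {s : ℝ} (hs0 : 0 < s) (hs1 : s ≤ 1)
    (V : α → β → ℝ) (hV0 : ∀ a b, 0 ≤ V a b)
    (Pa : α → ℝ) (hPa0 : ∀ x, 0 ≤ Pa x) (hPa1 : ∑ x, Pa x = 1)
    (Pb : β → ℝ) (hPb0 : ∀ x, 0 ≤ Pb x) (hPb1 : ∑ x, Pb x = 1)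
    (j1 : ι1) (j2 : ι2) :
    ∑ p : (ι1 → α) × (ι2 → β),
        ((∏ i, Pa (p.1 i)) * (∏ i, Pb (p.2 i))) *
          (V (p.1 j1) (p.2 j2) *
            (∑ j1' : {j : ι1 // j ≠ j1}, ∑ j2' : {j : ι2 // j ≠ j2},
              V (p.1 j1'.1) (p.2 j2'.1)) ^ s)
      ≤ ((Fintype.card {j : ι1 // j ≠ j1} : ℝ) * (Fintype.card {j : ι2 // j ≠ j2} : ℝ)) ^ s *
          (∑ a, Pa a * ∑ b, Pb b * V a b) ^ (1 + s) := by
  classical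
  have h1sne : (1 : ℝ) + s ≠ 0 := by positivity
  have hμ : (0:ℝ) ≤ ∑ a, Pa a * ∑ b, Pb b * V a b :=
    Finset.sum_nonneg fun a _ => mul_nonneg (hPa0 a)
      (Finset.sum_nonneg fun b _ => mul_nonneg (hPb0 b) (hV0 a b))
  have hwD1 : ∀ D : {j : ι1 // j ≠ j1} → α, (0:ℝ) ≤ ∏ j, Pa (D j) :=
    fun D => Finset.prod_nonneg fun j _ => hPa0 _
  have hwD2 : ∀ D : {j : ι2 // j ≠ j2} → β, (0:ℝ) ≤ ∏ j, Pb (D j) :=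
    fun D => Finset.prod_nonneg fun j _ => hPb0 _
  -- Step 1: inner split over the second codebook
  have step1 : ∀ C1 : ι1 → α,
      ∑ C2 : ι2 → β, (∏ i, Pb (C2 i)) *
          (V (C1 j1) (C2 j2) *
            (∑ j1' : {j : ι1 // j ≠ j1}, ∑ j2' : {j : ι2 // j ≠ j2},
              V (C1 j1'.1) (C2 j2'.1)) ^ s)
        = (∑ b, Pb b * V (C1 j1) b) *
            ∑ D2 : {j : ι2 // j ≠ j2} → β, (∏ j, Pb (D2 j)) *
              (∑ j1' : {j : ι1 // j ≠ j1}, ∑ j2' : {j : ι2 // j ≠ j2},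
                V (C1 j1'.1) (D2 j2')) ^ s :=
    fun C1 => resolv_split Pb j2 (fun b => V (C1 j1) b)
      (fun D2 => (∑ j1' : {j : ι1 // j ≠ j1}, ∑ j2' : {j : ι2 // j ≠ j2},
        V (C1 j1'.1) (D2 j2')) ^ s)
  -- Step 2: split over the first codebook
  have step2 : ∑ C1 : ι1 → α, (∏ i, Pa (C1 i)) *
        ((∑ b, Pb b * V (C1 j1) b) *
          ∑ D2 : {j : ι2 // j ≠ j2} → β, (∏ j, Pb (D2 j)) *
            (∑ j1' : {j : ι1 // j ≠ j1}, ∑ j2' : {j : ι2 // j ≠ j2},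
              V (C1 j1'.1) (D2 j2')) ^ s)
      = (∑ a, Pa a * ∑ b, Pb b * V a b) *
          ∑ D1 : {j : ι1 // j ≠ j1} → α, (∏ j, Pa (D1 j)) *
            ∑ D2 : {j : ι2 // j ≠ j2} → β, (∏ j, Pb (D2 j)) *
              (∑ j1' : {j : ι1 // j ≠ j1}, ∑ j2' : {j : ι2 // j ≠ j2},
                V (D1 j1') (D2 j2')) ^ s :=
    resolv_split Pa j1 (fun a => ∑ b, Pb b * V a b)
      (fun D1 => ∑ D2 : {j : ι2 // j ≠ j2} → β, (∏ j, Pb (D2 j)) *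
        (∑ j1' : {j : ι1 // j ≠ j1}, ∑ j2' : {j : ι2 // j ≠ j2},
          V (D1 j1') (D2 j2')) ^ s)
  -- Step 3: bound M by Jensen
  have hq0 : ∀ q : ({j : ι1 // j ≠ j1} → α) × ({j : ι2 // j ≠ j2} → β),
      (0:ℝ) ≤ (∏ j, Pa (q.1 j)) * (∏ j, Pb (q.2 j)) :=
    fun q => mul_nonneg (hwD1 q.1) (hwD2 q.2)
  have hq1 : ∑ q : ({j : ι1 // j ≠ j1} → α) × ({j : ι2 // j ≠ j2} → β),
      (∏ j, Pa (q.1 j)) * (∏ j, Pb (q.2 j)) = 1 := by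
    rw [Fintype.sum_prod_type]
    calc ∑ D1 : {j : ι1 // j ≠ j1} → α, ∑ D2 : {j : ι2 // j ≠ j2} → β,
          (∏ j, Pa (D1 j)) * (∏ j, Pb (D2 j))
        = ∑ D1 : {j : ι1 // j ≠ j1} → α, (∏ j, Pa (D1 j)) *
            ∑ D2 : {j : ι2 // j ≠ j2} → β, (∏ j, Pb (D2 j)) :=
          Finset.sum_congr rfl fun D1 _ => (Finset.mul_sum _ _ _).symm
      _ = 1 := by
          rw [resolv_sum_prod hPb1]
          simpa using resolv_sum_prod (ι := {j : ι1 // j ≠ j1}) hPa1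
  have hMsum : ∑ D1 : {j : ι1 // j ≠ j1} → α, (∏ j, Pa (D1 j)) *
        ∑ D2 : {j : ι2 // j ≠ j2} → β, (∏ j, Pb (D2 j)) *
          (∑ j1' : {j : ι1 // j ≠ j1}, ∑ j2' : {j : ι2 // j ≠ j2},
            V (D1 j1') (D2 j2')) ^ s
      = ∑ q : ({j : ι1 // j ≠ j1} → α) × ({j : ι2 // j ≠ j2} → β),
          ((∏ j, Pa (q.1 j)) * (∏ j, Pb (q.2 j))) *
            (∑ j1' : {j : ι1 // j ≠ j1}, ∑ j2' : {j : ι2 // j ≠ j2},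
              V (q.1 j1') (q.2 j2')) ^ s := by
    rw [Fintype.sum_prod_type]
    exact Finset.sum_congr rfl fun D1 _ => by
      rw [Finset.mul_sum]; exact Finset.sum_congr rfl fun D2 _ => by ring
  have hEmean : ∑ q : ({j : ι1 // j ≠ j1} → α) × ({j : ι2 // j ≠ j2} → β),
        ((∏ j, Pa (q.1 j)) * (∏ j, Pb (q.2 j))) *
          (∑ j1' : {j : ι1 // j ≠ j1}, ∑ j2' : {j : ι2 // j ≠ j2}, V (q.1 j1') (q.2 j2'))
      = ((Fintype.card {j : ι1 // j ≠ j1} : ℝ) * (Fintype.card {j : ι2 // j ≠ j2} : ℝ)) *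
          (∑ a, Pa a * ∑ b, Pb b * V a b) := by
    calc ∑ q : ({j : ι1 // j ≠ j1} → α) × ({j : ι2 // j ≠ j2} → β),
          ((∏ j, Pa (q.1 j)) * (∏ j, Pb (q.2 j))) *
            (∑ j1' : {j : ι1 // j ≠ j1}, ∑ j2' : {j : ι2 // j ≠ j2}, V (q.1 j1') (q.2 j2'))
        = ∑ q : ({j : ι1 // j ≠ j1} → α) × ({j : ι2 // j ≠ j2} → β),
            ∑ j1' : {j : ι1 // j ≠ j1}, ∑ j2' : {j : ι2 // j ≠ j2},
              ((∏ j, Pa (q.1 j)) * (∏ j, Pb (q.2 j))) * V (q.1 j1') (q.2 j2') :=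
          Finset.sum_congr rfl fun q _ => by
            rw [Finset.mul_sum]
            exact Finset.sum_congr rfl fun j1' _ => Finset.mul_sum _ _ _
      _ = ∑ j1' : {j : ι1 // j ≠ j1},
            ∑ q : ({j : ι1 // j ≠ j1} → α) × ({j : ι2 // j ≠ j2} → β),
              ∑ j2' : {j : ι2 // j ≠ j2},
              ((∏ j, Pa (q.1 j)) * (∏ j, Pb (q.2 j))) * V (q.1 j1') (q.2 j2') :=
          Finset.sum_comm
      _ = ∑ j1' : {j : ι1 // j ≠ j1}, ∑ j2' : {j : ι2 // j ≠ j2},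
            ∑ q : ({j : ι1 // j ≠ j1} → α) × ({j : ι2 // j ≠ j2} → β),
              ((∏ j, Pa (q.1 j)) * (∏ j, Pb (q.2 j))) * V (q.1 j1') (q.2 j2') :=
          Finset.sum_congr rfl fun j1' _ => Finset.sum_comm
      _ = ∑ _j1' : {j : ι1 // j ≠ j1}, ∑ _j2' : {j : ι2 // j ≠ j2},
            ∑ a, ∑ b, (Pa a * Pb b) * V a b :=
          Finset.sum_congr rfl fun j1' _ => Finset.sum_congr rfl fun j2' _ =>
            resolv_eval2 hPa1 hPb1 j1' j2' V
      _ = ((Fintype.card {j : ι1 // j ≠ j1} : ℝ) * (Fintype.card {j : ι2 // j ≠ j2} : ℝ)) *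
            (∑ a, Pa a * ∑ b, Pb b * V a b) := by
          rw [Finset.sum_const, Finset.sum_const, Finset.card_univ, Finset.card_univ,
            smul_smul, nsmul_eq_mul, Nat.cast_mul]
          congr 1
          refine Finset.sum_congr rfl fun a _ => ?_
          rw [Finset.mul_sum]
          exact Finset.sum_congr rfl fun b _ => by ring
  -- the swapped-sum in step 1 above needs care; now combine
  have hM : ∑ D1 : {j : ι1 // j ≠ j1} → α, (∏ j, Pa (D1 j)) *
        ∑ D2 : {j : ι2 // j ≠ j2} → β, (∏ j, Pb (D2 j)) *
          (∑ j1' : {j : ι1 // j ≠ j1}, ∑ j2' : {j : ι2 // j ≠ j2},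
            V (D1 j1') (D2 j2')) ^ s
      ≤ ((Fintype.card {j : ι1 // j ≠ j1} : ℝ) * (Fintype.card {j : ι2 // j ≠ j2} : ℝ)) ^ s *
          (∑ a, Pa a * ∑ b, Pb b * V a b) ^ s := by
    rw [hMsum]
    have hJ := resolv_jensen hs0 hs1
      (fun q : ({j : ι1 // j ≠ j1} → α) × ({j : ι2 // j ≠ j2} → β) =>
        (∏ j, Pa (q.1 j)) * (∏ j, Pb (q.2 j)))
      (fun q => ∑ j1' : {j : ι1 // j ≠ j1}, ∑ j2' : {j : ι2 // j ≠ j2},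
        V (q.1 j1') (q.2 j2'))
      hq0 hq1
      (fun q => Finset.sum_nonneg fun j1' _ => Finset.sum_nonneg fun j2' _ => hV0 _ _)
    refine hJ.trans ?_
    rw [hEmean, Real.mul_rpow (by positivity) hμ]
  calc ∑ p : (ι1 → α) × (ι2 → β),
        ((∏ i, Pa (p.1 i)) * (∏ i, Pb (p.2 i))) *
          (V (p.1 j1) (p.2 j2) *
            (∑ j1' : {j : ι1 // j ≠ j1}, ∑ j2' : {j : ι2 // j ≠ j2},
              V (p.1 j1'.1) (p.2 j2'.1)) ^ s)
      = ∑ C1 : ι1 → α, (∏ i, Pa (C1 i)) *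
          ((∑ b, Pb b * V (C1 j1) b) *
            ∑ D2 : {j : ι2 // j ≠ j2} → β, (∏ j, Pb (D2 j)) *
              (∑ j1' : {j : ι1 // j ≠ j1}, ∑ j2' : {j : ι2 // j ≠ j2},
                V (C1 j1'.1) (D2 j2')) ^ s) := by
        rw [Fintype.sum_prod_type]
        refine Finset.sum_congr rfl fun C1 _ => ?_
        rw [← step1 C1, Finset.mul_sum]
        exact Finset.sum_congr rfl fun C2 _ => by ring
    _ = (∑ a, Pa a * ∑ b, Pb b * V a b) *
          ∑ D1 : {j : ι1 // j ≠ j1} → α, (∏ j, Pa (D1 j)) *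
            ∑ D2 : {j : ι2 // j ≠ j2} → β, (∏ j, Pb (D2 j)) *
              (∑ j1' : {j : ι1 // j ≠ j1}, ∑ j2' : {j : ι2 // j ≠ j2},
                V (D1 j1') (D2 j2')) ^ s := step2
    _ ≤ (∑ a, Pa a * ∑ b, Pb b * V a b) *
          (((Fintype.card {j : ι1 // j ≠ j1} : ℝ) * (Fintype.card {j : ι2 // j ≠ j2} : ℝ)) ^ s *
            (∑ a, Pa a * ∑ b, Pb b * V a b) ^ s) :=
        mul_le_mul_of_nonneg_left hM hμ
    _ = ((Fintype.card {j : ι1 // j ≠ j1} : ℝ) * (Fintype.card {j : ι2 // j ≠ j2} : ℝ)) ^ s *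
          (∑ a, Pa a * ∑ b, Pb b * V a b) ^ (1 + s) := by
        rw [Real.rpow_one_add' hμ h1sne]; ring

private lemma resolv_core {X1 X2 Z : Type*} [Fintype X1] [Fintype X2] [Fintype Z]
    (W : X1 → X2 → Z → ℝ) (hW0 : ∀ x1 x2 z, 0 ≤ W x1 x2 z)
    (P1 : X1 → ℝ) (hP10 : ∀ x, 0 ≤ P1 x) (hP11 : ∑ x, P1 x = 1)
    (P2 : X2 → ℝ) (hP20 : ∀ x, 0 ≤ P2 x) (hP21 : ∑ x, P2 x = 1)
    {L1 L2 : ℕ} (j1 : Fin L1) (j2 : Fin L2)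
    {s : ℝ} (hs0 : 0 < s) (hs1 : s ≤ 1) (z : Z) :
    ∑ p : (Fin L1 → X1) × (Fin L2 → X2),
        ((∏ j, P1 (p.1 j)) * (∏ j, P2 (p.2 j))) *
          (W (p.1 j1) (p.2 j2) z * (∑ k1, ∑ k2, W (p.1 k1) (p.2 k2) z) ^ s)
      ≤ (∑ x1, ∑ x2, (P1 x1 * P2 x2) * W x1 x2 z ^ (1 + s))
        + (L2 : ℝ) ^ s * ∑ x1, P1 x1 * (∑ x2, P2 x2 * W x1 x2 z) ^ (1 + s)
        + (L1 : ℝ) ^ s * ∑ x2, P2 x2 * (∑ x1, P1 x1 * W x1 x2 z) ^ (1 + s)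
        + ((L1 : ℝ) * (L2 : ℝ)) ^ s *
            (∑ x1, ∑ x2, P1 x1 * P2 x2 * W x1 x2 z) ^ (1 + s) := by
  classical
  have h1sne : (1 : ℝ) + s ≠ 0 := by positivity
  have hsub1 : ∀ g : Fin L1 → ℝ,
      ∑ k ∈ Finset.univ.erase j1, g k = ∑ k : {j : Fin L1 // j ≠ j1}, g k.1 :=
    fun g => Finset.sum_subtype _ (fun j => by simp) g
  have hsub2 : ∀ g : Fin L2 → ℝ,
      ∑ k ∈ Finset.univ.erase j2, g k = ∑ k : {j : Fin L2 // j ≠ j2}, g k.1 :=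
    fun g => Finset.sum_subtype _ (fun j => by simp) g
  -- decomposition of the full codeword sum
  have hdec : ∀ p : (Fin L1 → X1) × (Fin L2 → X2),
      (∑ k1, ∑ k2, W (p.1 k1) (p.2 k2) z)
        = W (p.1 j1) (p.2 j2) z
          + (∑ j2' : {j : Fin L2 // j ≠ j2}, W (p.1 j1) (p.2 j2'.1) z)
          + (∑ j1' : {j : Fin L1 // j ≠ j1}, W (p.1 j1'.1) (p.2 j2) z)
          + (∑ j1' : {j : Fin L1 // j ≠ j1}, ∑ j2' : {j : Fin L2 // j ≠ j2},
              W (p.1 j1'.1) (p.2 j2'.1) z) := by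
    intro p
    rw [← Finset.add_sum_erase _ (fun k1 => ∑ k2, W (p.1 k1) (p.2 k2) z)
        (Finset.mem_univ j1),
      ← Finset.add_sum_erase _ (fun k2 => W (p.1 j1) (p.2 k2) z) (Finset.mem_univ j2)]
    have hrest : ∑ k1 ∈ Finset.univ.erase j1, ∑ k2, W (p.1 k1) (p.2 k2) z
        = (∑ j1' : {j : Fin L1 // j ≠ j1}, W (p.1 j1'.1) (p.2 j2) z)
          + ∑ j1' : {j : Fin L1 // j ≠ j1}, ∑ j2' : {j : Fin L2 // j ≠ j2},
              W (p.1 j1'.1) (p.2 j2'.1) z := by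
      rw [← hsub1 (fun k1 => W (p.1 k1) (p.2 j2) z),
        ← hsub1 (fun k1 => ∑ j2' : {j : Fin L2 // j ≠ j2}, W (p.1 k1) (p.2 j2'.1) z),
        ← Finset.sum_add_distrib]
      refine Finset.sum_congr rfl fun k1 _ => ?_
      rw [← hsub2 (fun k2 => W (p.1 k1) (p.2 k2) z)]
      exact (Finset.add_sum_erase _ _ (Finset.mem_univ j2)).symm
    rw [hrest, hsub2 (fun k2 => W (p.1 j1) (p.2 k2) z)]
    ring
  -- nonnegativity helpers
  have hA0 : ∀ p : (Fin L1 → X1) × (Fin L2 → X2),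
      (0:ℝ) ≤ ∑ j2' : {j : Fin L2 // j ≠ j2}, W (p.1 j1) (p.2 j2'.1) z :=
    fun p => Finset.sum_nonneg fun _ _ => hW0 _ _ _
  have hB0 : ∀ p : (Fin L1 → X1) × (Fin L2 → X2),
      (0:ℝ) ≤ ∑ j1' : {j : Fin L1 // j ≠ j1}, W (p.1 j1'.1) (p.2 j2) z :=
    fun p => Finset.sum_nonneg fun _ _ => hW0 _ _ _
  have hC0 : ∀ p : (Fin L1 → X1) × (Fin L2 → X2),
      (0:ℝ) ≤ ∑ j1' : {j : Fin L1 // j ≠ j1}, ∑ j2' : {j : Fin L2 // j ≠ j2},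
        W (p.1 j1'.1) (p.2 j2'.1) z :=
    fun p => Finset.sum_nonneg fun _ _ => Finset.sum_nonneg fun _ _ => hW0 _ _ _
  -- subadditivity of x ↦ x^s
  have h4 : ∀ p : (Fin L1 → X1) × (Fin L2 → X2),
      (∑ k1, ∑ k2, W (p.1 k1) (p.2 k2) z) ^ s
        ≤ W (p.1 j1) (p.2 j2) z ^ s
          + (∑ j2' : {j : Fin L2 // j ≠ j2}, W (p.1 j1) (p.2 j2'.1) z) ^ s
          + (∑ j1' : {j : Fin L1 // j ≠ j1}, W (p.1 j1'.1) (p.2 j2) z) ^ s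
          + (∑ j1' : {j : Fin L1 // j ≠ j1}, ∑ j2' : {j : Fin L2 // j ≠ j2},
              W (p.1 j1'.1) (p.2 j2'.1) z) ^ s := by
    intro p
    rw [hdec p]
    have hW' := hW0 (p.1 j1) (p.2 j2) z
    calc (W (p.1 j1) (p.2 j2) z
            + (∑ j2' : {j : Fin L2 // j ≠ j2}, W (p.1 j1) (p.2 j2'.1) z)
            + (∑ j1' : {j : Fin L1 // j ≠ j1}, W (p.1 j1'.1) (p.2 j2) z)
            + (∑ j1' : {j : Fin L1 // j ≠ j1}, ∑ j2' : {j : Fin L2 // j ≠ j2},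
                W (p.1 j1'.1) (p.2 j2'.1) z)) ^ s
        ≤ (W (p.1 j1) (p.2 j2) z
            + (∑ j2' : {j : Fin L2 // j ≠ j2}, W (p.1 j1) (p.2 j2'.1) z)
            + (∑ j1' : {j : Fin L1 // j ≠ j1}, W (p.1 j1'.1) (p.2 j2) z)) ^ s
          + (∑ j1' : {j : Fin L1 // j ≠ j1}, ∑ j2' : {j : Fin L2 // j ≠ j2},
                W (p.1 j1'.1) (p.2 j2'.1) z) ^ s :=
          resolv_rpow_add_le hs0.le hs1
            (by have := hW0 (p.1 j1) (p.2 j2) z; have := hA0 p; have := hB0 p; linarith)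
            (hC0 p)
      _ ≤ ((W (p.1 j1) (p.2 j2) z
            + (∑ j2' : {j : Fin L2 // j ≠ j2}, W (p.1 j1) (p.2 j2'.1) z)) ^ s
          + (∑ j1' : {j : Fin L1 // j ≠ j1}, W (p.1 j1'.1) (p.2 j2) z) ^ s)
          + (∑ j1' : {j : Fin L1 // j ≠ j1}, ∑ j2' : {j : Fin L2 // j ≠ j2},
                W (p.1 j1'.1) (p.2 j2'.1) z) ^ s :=
          add_le_add_left (resolv_rpow_add_le hs0.le hs1
            (by have := hW0 (p.1 j1) (p.2 j2) z; have := hA0 p; linarith) (hB0 p)) _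
      _ ≤ ((W (p.1 j1) (p.2 j2) z ^ s
            + (∑ j2' : {j : Fin L2 // j ≠ j2}, W (p.1 j1) (p.2 j2'.1) z) ^ s)
          + (∑ j1' : {j : Fin L1 // j ≠ j1}, W (p.1 j1'.1) (p.2 j2) z) ^ s)
          + (∑ j1' : {j : Fin L1 // j ≠ j1}, ∑ j2' : {j : Fin L2 // j ≠ j2},
                W (p.1 j1'.1) (p.2 j2'.1) z) ^ s :=
          add_le_add_left (add_le_add_left
            (resolv_rpow_add_le hs0.le hs1 hW' (hA0 p)) _) _
      _ = _ := by ring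
  have hwnn : ∀ p : (Fin L1 → X1) × (Fin L2 → X2),
      (0:ℝ) ≤ (∏ j, P1 (p.1 j)) * (∏ j, P2 (p.2 j)) :=
    fun p => mul_nonneg (Finset.prod_nonneg fun _ _ => hP10 _)
      (Finset.prod_nonneg fun _ _ => hP20 _)
  -- split the sum into four parts
  have hmain : ∑ p : (Fin L1 → X1) × (Fin L2 → X2),
        ((∏ j, P1 (p.1 j)) * (∏ j, P2 (p.2 j))) *
          (W (p.1 j1) (p.2 j2) z * (∑ k1, ∑ k2, W (p.1 k1) (p.2 k2) z) ^ s)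
      ≤ (∑ p : (Fin L1 → X1) × (Fin L2 → X2),
          ((∏ j, P1 (p.1 j)) * (∏ j, P2 (p.2 j))) *
            (W (p.1 j1) (p.2 j2) z * W (p.1 j1) (p.2 j2) z ^ s))
        + (∑ p : (Fin L1 → X1) × (Fin L2 → X2),
          ((∏ j, P1 (p.1 j)) * (∏ j, P2 (p.2 j))) *
            (W (p.1 j1) (p.2 j2) z *
              (∑ j2' : {j : Fin L2 // j ≠ j2}, W (p.1 j1) (p.2 j2'.1) z) ^ s))
        + (∑ p : (Fin L1 → X1) × (Fin L2 → X2),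
          ((∏ j, P1 (p.1 j)) * (∏ j, P2 (p.2 j))) *
            (W (p.1 j1) (p.2 j2) z *
              (∑ j1' : {j : Fin L1 // j ≠ j1}, W (p.1 j1'.1) (p.2 j2) z) ^ s))
        + (∑ p : (Fin L1 → X1) × (Fin L2 → X2),
          ((∏ j, P1 (p.1 j)) * (∏ j, P2 (p.2 j))) *
            (W (p.1 j1) (p.2 j2) z *
              (∑ j1' : {j : Fin L1 // j ≠ j1}, ∑ j2' : {j : Fin L2 // j ≠ j2},
                W (p.1 j1'.1) (p.2 j2'.1) z) ^ s)) := by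
    rw [← Finset.sum_add_distrib, ← Finset.sum_add_distrib, ← Finset.sum_add_distrib]
    refine Finset.sum_le_sum fun p _ => ?_
    have := mul_le_mul_of_nonneg_left (h4 p) (hW0 (p.1 j1) (p.2 j2) z)
    have h5 := mul_le_mul_of_nonneg_left this (hwnn p)
    calc ((∏ j, P1 (p.1 j)) * (∏ j, P2 (p.2 j))) *
          (W (p.1 j1) (p.2 j2) z * (∑ k1, ∑ k2, W (p.1 k1) (p.2 k2) z) ^ s)
        ≤ ((∏ j, P1 (p.1 j)) * (∏ j, P2 (p.2 j))) *
          (W (p.1 j1) (p.2 j2) z *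
            (W (p.1 j1) (p.2 j2) z ^ s
              + (∑ j2' : {j : Fin L2 // j ≠ j2}, W (p.1 j1) (p.2 j2'.1) z) ^ s
              + (∑ j1' : {j : Fin L1 // j ≠ j1}, W (p.1 j1'.1) (p.2 j2) z) ^ s
              + (∑ j1' : {j : Fin L1 // j ≠ j1}, ∑ j2' : {j : Fin L2 // j ≠ j2},
                  W (p.1 j1'.1) (p.2 j2'.1) z) ^ s)) := h5
      _ = _ := by ring
  refine hmain.trans ?_
  -- bound each of the four parts
  have hpart1 : ∑ p : (Fin L1 → X1) × (Fin L2 → X2),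
      ((∏ j, P1 (p.1 j)) * (∏ j, P2 (p.2 j))) *
        (W (p.1 j1) (p.2 j2) z * W (p.1 j1) (p.2 j2) z ^ s)
      ≤ ∑ x1, ∑ x2, (P1 x1 * P2 x2) * W x1 x2 z ^ (1 + s) := by
    have hSone : ∑ p : (Fin L1 → X1) × (Fin L2 → X2),
        ((∏ j, P1 (p.1 j)) * (∏ j, P2 (p.2 j))) *
          (W (p.1 j1) (p.2 j2) z * W (p.1 j1) (p.2 j2) z ^ s)
        = ∑ p : (Fin L1 → X1) × (Fin L2 → X2),
        ((∏ j, P1 (p.1 j)) * (∏ j, P2 (p.2 j))) * W (p.1 j1) (p.2 j2) z ^ (1 + s) :=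
      Finset.sum_congr rfl fun p _ => by
        rw [Real.rpow_one_add' (hW0 (p.1 j1) (p.2 j2) z) h1sne]
    rw [hSone]
    exact le_of_eq (resolv_eval2 hP11 hP21 j1 j2 (fun x1 x2 => W x1 x2 z ^ (1 + s)))
  have hpart2 : ∑ p : (Fin L1 → X1) × (Fin L2 → X2),
      ((∏ j, P1 (p.1 j)) * (∏ j, P2 (p.2 j))) *
        (W (p.1 j1) (p.2 j2) z *
          (∑ j2' : {j : Fin L2 // j ≠ j2}, W (p.1 j1) (p.2 j2'.1) z) ^ s)
      ≤ (L2 : ℝ) ^ s * ∑ x1, P1 x1 * (∑ x2, P2 x2 * W x1 x2 z) ^ (1 + s) := by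
    have h := resolv_sigma2 hs0 hs1 (fun x1 x2 => W x1 x2 z) (fun x1 x2 => hW0 x1 x2 z)
      P1 hP10 hP11 P2 hP20 hP21 j1 j2
    refine h.trans ?_
    have hcard : (Fintype.card {j : Fin L2 // j ≠ j2} : ℝ) ≤ (L2 : ℝ) := by
      have h1 : Fintype.card {j : Fin L2 // j ≠ j2} ≤ L2 :=
        le_trans (Fintype.card_subtype_le _) (by simp)
      exact_mod_cast h1
    refine mul_le_mul_of_nonneg_right
      (Real.rpow_le_rpow (by positivity) hcard hs0.le)
      (Finset.sum_nonneg fun x1 _ => mul_nonneg (hP10 x1)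
        (Real.rpow_nonneg (Finset.sum_nonneg fun x2 _ =>
          mul_nonneg (hP20 x2) (hW0 x1 x2 z)) _))
  have hpart3 : ∑ p : (Fin L1 → X1) × (Fin L2 → X2),
      ((∏ j, P1 (p.1 j)) * (∏ j, P2 (p.2 j))) *
        (W (p.1 j1) (p.2 j2) z *
          (∑ j1' : {j : Fin L1 // j ≠ j1}, W (p.1 j1'.1) (p.2 j2) z) ^ s)
      ≤ (L1 : ℝ) ^ s * ∑ x2, P2 x2 * (∑ x1, P1 x1 * W x1 x2 z) ^ (1 + s) := by
    have hswap : ∑ p : (Fin L1 → X1) × (Fin L2 → X2),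
        ((∏ j, P1 (p.1 j)) * (∏ j, P2 (p.2 j))) *
          (W (p.1 j1) (p.2 j2) z *
            (∑ j1' : {j : Fin L1 // j ≠ j1}, W (p.1 j1'.1) (p.2 j2) z) ^ s)
        = ∑ q : (Fin L2 → X2) × (Fin L1 → X1),
        ((∏ j, P2 (q.1 j)) * (∏ j, P1 (q.2 j))) *
          (W (q.2 j1) (q.1 j2) z *
            (∑ j1' : {j : Fin L1 // j ≠ j1}, W (q.2 j1'.1) (q.1 j2) z) ^ s) := by
      refine Fintype.sum_equiv (Equiv.prodComm _ _) _ _ (fun p => ?_)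
      simp only [Equiv.prodComm_apply, Prod.fst_swap, Prod.snd_swap]
      ring
    rw [hswap]
    have h := resolv_sigma2 hs0 hs1 (fun x2 x1 => W x1 x2 z) (fun x2 x1 => hW0 x1 x2 z)
      P2 hP20 hP21 P1 hP10 hP11 j2 j1
    refine h.trans ?_
    have hcard : (Fintype.card {j : Fin L1 // j ≠ j1} : ℝ) ≤ (L1 : ℝ) := by
      have h1 : Fintype.card {j : Fin L1 // j ≠ j1} ≤ L1 :=
        le_trans (Fintype.card_subtype_le _) (by simp)
      exact_mod_cast h1
    refine mul_le_mul_of_nonneg_right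
      (Real.rpow_le_rpow (by positivity) hcard hs0.le)
      (Finset.sum_nonneg fun x2 _ => mul_nonneg (hP20 x2)
        (Real.rpow_nonneg (Finset.sum_nonneg fun x1 _ =>
          mul_nonneg (hP10 x1) (hW0 x1 x2 z)) _))
  have hpart4 : ∑ p : (Fin L1 → X1) × (Fin L2 → X2),
      ((∏ j, P1 (p.1 j)) * (∏ j, P2 (p.2 j))) *
        (W (p.1 j1) (p.2 j2) z *
          (∑ j1' : {j : Fin L1 // j ≠ j1}, ∑ j2' : {j : Fin L2 // j ≠ j2},
            W (p.1 j1'.1) (p.2 j2'.1) z) ^ s)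
      ≤ ((L1 : ℝ) * (L2 : ℝ)) ^ s *
          (∑ x1, ∑ x2, P1 x1 * P2 x2 * W x1 x2 z) ^ (1 + s) := by
    have h := resolv_sigma4 hs0 hs1 (fun x1 x2 => W x1 x2 z) (fun x1 x2 => hW0 x1 x2 z)
      P1 hP10 hP11 P2 hP20 hP21 j1 j2
    refine h.trans ?_
    have hμeq : ∑ x1, P1 x1 * ∑ x2, P2 x2 * W x1 x2 z
        = ∑ x1, ∑ x2, P1 x1 * P2 x2 * W x1 x2 z := by
      refine Finset.sum_congr rfl fun x1 _ => ?_
      rw [Finset.mul_sum]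
      exact Finset.sum_congr rfl fun x2 _ => by ring
    rw [hμeq]
    have hcard1 : (Fintype.card {j : Fin L1 // j ≠ j1} : ℝ) ≤ (L1 : ℝ) := by
      have h1 : Fintype.card {j : Fin L1 // j ≠ j1} ≤ L1 :=
        le_trans (Fintype.card_subtype_le _) (by simp)
      exact_mod_cast h1
    have hcard2 : (Fintype.card {j : Fin L2 // j ≠ j2} : ℝ) ≤ (L2 : ℝ) := by
      have h1 : Fintype.card {j : Fin L2 // j ≠ j2} ≤ L2 :=
        le_trans (Fintype.card_subtype_le _) (by simp)
      exact_mod_cast h1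
    refine mul_le_mul_of_nonneg_right
      (Real.rpow_le_rpow (by positivity)
        (mul_le_mul hcard1 hcard2 (by positivity) (by positivity)) hs0.le)
      (Real.rpow_nonneg (Finset.sum_nonneg fun x1 _ => Finset.sum_nonneg fun x2 _ =>
        mul_nonneg (mul_nonneg (hP10 x1) (hP20 x2)) (hW0 x1 x2 z)) _)
  exact add_le_add (add_le_add (add_le_add hpart1 hpart2) hpart3) hpart4

private lemma resolv_term {a w q : ℝ} (ha : 0 ≤ a) (hw : 0 ≤ w) (hq : 0 < q)
    {s : ℝ} (hs0 : 0 < s) :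
    (a * w) ^ (1 + s) * (q * a) ^ (-s) = q ^ (-s) * (a * w ^ (1 + s)) := by
  rcases eq_or_lt_of_le ha with h0 | hpos
  · rw [← h0]
    rw [zero_mul, mul_zero, Real.zero_rpow (by positivity : (1:ℝ) + s ≠ 0),
      Real.zero_rpow (neg_ne_zero.2 (ne_of_gt hs0))]
    ring
  · rw [Real.mul_rpow hpos.le hw, Real.mul_rpow hq.le hpos.le]
    have key : a ^ (1 + s) * a ^ (-s) = a := by
      rw [← Real.rpow_add hpos, show (1:ℝ) + s + -s = 1 by ring, Real.rpow_one]
    linear_combination (w ^ (1 + s) * q ^ (-s)) * key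

private lemma resolv_logsum_le {ι : Type*} [Fintype ι] (w a : ι → ℝ)
    (hw0 : ∀ i, 0 ≤ w i) (hw1 : ∑ i, w i = 1) (ha : ∀ i, 0 < a i)
    {B : ℝ} (hB : ∑ i, w i * a i ≤ 1 + B) :
    ∑ i, w i * Real.log (a i) ≤ B := by
  have h1 := resolv_jensen_log w a hw0 hw1 ha
  have hS : 0 < ∑ i, w i * a i := by
    have hex : ∃ i, 0 < w i := by
      by_contra h; push_neg at h
      have h2 : ∑ i, w i ≤ 0 := Finset.sum_nonpos fun i _ => h i
      rw [hw1] at h2; linarith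
    obtain ⟨i0, hi0⟩ := hex
    exact Finset.sum_pos' (fun i _ => mul_nonneg (hw0 i) (ha i).le)
      ⟨i0, Finset.mem_univ i0, mul_pos hi0 (ha i0)⟩
  have h2 := Real.log_le_sub_one_of_pos hS
  linarith

private lemma resolv_algebra {s n1 n2 pz g1 g2 g12 : ℝ}
    (hn1 : 0 < n1) (hn2 : 0 < n2) (hpz : 0 < pz) :
    pz ^ (-s) * ((1/(n1*n2)) ^ (1+s) *
        ((n1*n2) * (g12 + n2^s * g1 + n1^s * g2 + (n1*n2)^s * pz^(1+s))))
      = pz + n1^(-s) * (pz^(-s) * g1) + n2^(-s) * (pz^(-s) * g2)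
        + (n1*n2)^(-s) * (pz^(-s) * g12) := by
  have hn : 0 < n1 * n2 := mul_pos hn1 hn2
  have e1 : (1/(n1*n2)) ^ (1+s) * (n1*n2) = (n1*n2) ^ (-s) := by
    have h2 : (n1*n2) ^ (-s) = (n1*n2) ^ ((1:ℝ) - (1+s)) := by ring_nf
    rw [h2, Real.rpow_sub hn, Real.rpow_one, one_div, Real.inv_rpow hn.le]
    exact inv_mul_eq_div _ _
  have hA1 : n1 ^ (-s) * n1 ^ s = 1 := by
    rw [← Real.rpow_add hn1, neg_add_cancel, Real.rpow_zero]
  have hA2 : n2 ^ (-s) * n2 ^ s = 1 := by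
    rw [← Real.rpow_add hn2, neg_add_cancel, Real.rpow_zero]
  have hq' : pz ^ (-s) * pz ^ (1+s) = pz := by
    rw [← Real.rpow_add hpz, show -s + (1+s) = (1:ℝ) by ring, Real.rpow_one]
  have step : pz ^ (-s) * ((1/(n1*n2)) ^ (1+s) *
        ((n1*n2) * (g12 + n2^s * g1 + n1^s * g2 + (n1*n2)^s * pz^(1+s))))
      = ((1/(n1*n2)) ^ (1+s) * (n1*n2)) * (pz^(-s) * g12)
        + ((1/(n1*n2)) ^ (1+s) * (n1*n2)) * n2^s * (pz^(-s) * g1)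
        + ((1/(n1*n2)) ^ (1+s) * (n1*n2)) * n1^s * (pz^(-s) * g2)
        + ((1/(n1*n2)) ^ (1+s) * (n1*n2)) * (n1*n2)^s * (pz^(-s) * pz^(1+s)) := by
    ring
  rw [step, e1, Real.mul_rpow hn1.le hn2.le, Real.mul_rpow hn1.le hn2.le, hq']
  linear_combination (n1^(-s) * pz^(-s) * g1) * hA2 + (n2^(-s) * pz^(-s) * g2) * hA1
    + (pz * n1^(-s) * n1^s) * hA2 + pz * hA1

/-- Lemma 2, channel resolvability for a two-transmitter MAC:
for every `s ∈ (0,1]`,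
`s · E_𝒞[D_{1+s}(P_{Z|𝒞} ‖ P_Z)] ≤ ∑_{∅≠S⊆{1,2}} (∏_{i∈S} L_i)^{-s} exp(s I↓_{1+s}(Z;X_S))`. -/
theorem resolvability_two_MAC
    {X1 X2 Z : Type*} [Fintype X1] [Fintype X2] [Fintype Z]
    (W : X1 → X2 → Z → ℝ)
    (hW0 : ∀ x1 x2 z, 0 ≤ W x1 x2 z) (hW1 : ∀ x1 x2, ∑ z, W x1 x2 z = 1)
    (P1 : X1 → ℝ) (hP10 : ∀ x, 0 ≤ P1 x) (hP11 : ∑ x, P1 x = 1)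
    (P2 : X2 → ℝ) (hP20 : ∀ x, 0 ≤ P2 x) (hP21 : ∑ x, P2 x = 1)
    (L1 L2 : ℕ) (hL1 : 0 < L1) (hL2 : 0 < L2)
    (PZ : Z → ℝ) (hPZ : ∀ z, PZ z = ∑ x1, ∑ x2, P1 x1 * P2 x2 * W x1 x2 z)
    (hPZpos : ∀ z, 0 < PZ z)
    (s : ℝ) (hs : s ∈ Set.Ioc (0 : ℝ) 1) :
    s * (∑ C1 : Fin L1 → X1, ∑ C2 : Fin L2 → X2,
        (∏ j, P1 (C1 j)) * (∏ j, P2 (C2 j)) *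
          renyiD s
            (fun z => (1 / ((L1 : ℝ) * (L2 : ℝ))) * ∑ j1, ∑ j2, W (C1 j1) (C2 j2) z) PZ)
      ≤ (L1 : ℝ) ^ (-s) *
            Real.exp (s * renyiD s
              (fun p : Z × X1 => ∑ x2, P1 p.2 * P2 x2 * W p.2 x2 p.1)
              (fun p : Z × X1 => PZ p.1 * P1 p.2))
        + (L2 : ℝ) ^ (-s) *
            Real.exp (s * renyiD s
              (fun p : Z × X2 => ∑ x1, P1 x1 * P2 p.2 * W x1 p.2 p.1)
              (fun p : Z × X2 => PZ p.1 * P2 p.2))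
        + ((L1 : ℝ) * (L2 : ℝ)) ^ (-s) *
            Real.exp (s * renyiD s
              (fun p : Z × (X1 × X2) => P1 p.2.1 * P2 p.2.2 * W p.2.1 p.2.2 p.1)
              (fun p : Z × (X1 × X2) => PZ p.1 * (P1 p.2.1 * P2 p.2.2))) := by
  classical
  obtain ⟨hs0, hs1⟩ := hs
  have hsne : s ≠ 0 := ne_of_gt hs0
  have h1sne : (1:ℝ) + s ≠ 0 := by positivity
  have hL1R : (0:ℝ) < (L1:ℝ) := by exact_mod_cast hL1
  have hL2R : (0:ℝ) < (L2:ℝ) := by exact_mod_cast hL2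
  have hNpos : (0:ℝ) < (L1:ℝ) * (L2:ℝ) := mul_pos hL1R hL2R
  -- nonemptiness
  have hX1ne : Nonempty X1 := by
    by_contra h
    rw [not_nonempty_iff] at h
    rw [Finset.univ_eq_empty, Finset.sum_empty] at hP11
    exact one_ne_zero hP11.symm
  have hX2ne : Nonempty X2 := by
    by_contra h
    rw [not_nonempty_iff] at h
    rw [Finset.univ_eq_empty, Finset.sum_empty] at hP21
    exact one_ne_zero hP21.symm
  have hZne : Nonempty Z := by
    obtain ⟨x1⟩ := hX1ne
    obtain ⟨x2⟩ := hX2ne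
    by_contra h
    rw [not_nonempty_iff] at h
    have h2 := hW1 x1 x2
    rw [Finset.univ_eq_empty, Finset.sum_empty] at h2
    exact one_ne_zero h2.symm
  -- marginals
  have hW1nn : ∀ x1 z, (0:ℝ) ≤ ∑ x2, P2 x2 * W x1 x2 z :=
    fun x1 z => Finset.sum_nonneg fun x2 _ => mul_nonneg (hP20 x2) (hW0 x1 x2 z)
  have hW2nn : ∀ x2 z, (0:ℝ) ≤ ∑ x1, P1 x1 * W x1 x2 z :=
    fun x2 z => Finset.sum_nonneg fun x1 _ => mul_nonneg (hP10 x1) (hW0 x1 x2 z)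
  have hPZ1 : ∀ z, ∑ x1, P1 x1 * ∑ x2, P2 x2 * W x1 x2 z = PZ z := by
    intro z
    rw [hPZ z]
    refine Finset.sum_congr rfl fun x1 _ => ?_
    rw [Finset.mul_sum]
    exact Finset.sum_congr rfl fun x2 _ => by ring
  have hPZ2 : ∀ z, ∑ x2, P2 x2 * ∑ x1, P1 x1 * W x1 x2 z = PZ z := by
    intro z
    rw [hPZ z, Finset.sum_comm]
    refine Finset.sum_congr rfl fun x2 _ => ?_
    rw [Finset.mul_sum]
    exact Finset.sum_congr rfl fun x1 _ => by ring
  -- positivity of the three "G" sums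
  have hG1pos : ∀ z, 0 < ∑ x1, P1 x1 * (∑ x2, P2 x2 * W x1 x2 z) ^ (1+s) := by
    intro z
    have hex : ∃ x1, 0 < P1 x1 * ∑ x2, P2 x2 * W x1 x2 z := by
      by_contra h; push_neg at h
      have h2 : ∑ x1, P1 x1 * ∑ x2, P2 x2 * W x1 x2 z ≤ 0 :=
        Finset.sum_nonpos fun x1 _ => h x1
      rw [hPZ1 z] at h2
      exact absurd h2 (not_le.2 (hPZpos z))
    obtain ⟨x1, hx1⟩ := hex
    have hp : 0 < P1 x1 := by
      rcases mul_pos_iff.1 hx1 with ⟨h1, _⟩ | ⟨h1, _⟩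
      · exact h1
      · exact absurd h1 (not_lt.2 (hP10 x1))
    have hw : 0 < ∑ x2, P2 x2 * W x1 x2 z := by
      rcases mul_pos_iff.1 hx1 with ⟨_, h2⟩ | ⟨h1, _⟩
      · exact h2
      · exact absurd h1 (not_lt.2 (hP10 x1))
    exact Finset.sum_pos'
      (fun x _ => mul_nonneg (hP10 x) (Real.rpow_nonneg (hW1nn x z) _))
      ⟨x1, Finset.mem_univ x1, mul_pos hp (Real.rpow_pos_of_pos hw _)⟩
  have hG2pos : ∀ z, 0 < ∑ x2, P2 x2 * (∑ x1, P1 x1 * W x1 x2 z) ^ (1+s) := by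
    intro z
    have hex : ∃ x2, 0 < P2 x2 * ∑ x1, P1 x1 * W x1 x2 z := by
      by_contra h; push_neg at h
      have h2 : ∑ x2, P2 x2 * ∑ x1, P1 x1 * W x1 x2 z ≤ 0 :=
        Finset.sum_nonpos fun x2 _ => h x2
      rw [hPZ2 z] at h2
      exact absurd h2 (not_le.2 (hPZpos z))
    obtain ⟨x2, hx2⟩ := hex
    have hp : 0 < P2 x2 := by
      rcases mul_pos_iff.1 hx2 with ⟨h1, _⟩ | ⟨h1, _⟩
      · exact h1
      · exact absurd h1 (not_lt.2 (hP20 x2))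
    have hw : 0 < ∑ x1, P1 x1 * W x1 x2 z := by
      rcases mul_pos_iff.1 hx2 with ⟨_, h2⟩ | ⟨h1, _⟩
      · exact h2
      · exact absurd h1 (not_lt.2 (hP20 x2))
    exact Finset.sum_pos'
      (fun x _ => mul_nonneg (hP20 x) (Real.rpow_nonneg (hW2nn x z) _))
      ⟨x2, Finset.mem_univ x2, mul_pos hp (Real.rpow_pos_of_pos hw _)⟩
  have hG12pos : ∀ z, 0 < ∑ x1, ∑ x2, (P1 x1 * P2 x2) * W x1 x2 z ^ (1+s) := by
    intro z
    have hsum : ∑ p : X1 × X2, (P1 p.1 * P2 p.2) * W p.1 p.2 z = PZ z := by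
      rw [Fintype.sum_prod_type, hPZ z]
    have hex : ∃ p : X1 × X2, 0 < (P1 p.1 * P2 p.2) * W p.1 p.2 z := by
      by_contra h; push_neg at h
      have h2 : ∑ p : X1 × X2, (P1 p.1 * P2 p.2) * W p.1 p.2 z ≤ 0 :=
        Finset.sum_nonpos fun p _ => h p
      rw [hsum] at h2
      exact absurd h2 (not_le.2 (hPZpos z))
    obtain ⟨p0, hp0⟩ := hex
    have ha : 0 ≤ P1 p0.1 * P2 p0.2 := mul_nonneg (hP10 _) (hP20 _)
    have hp : 0 < P1 p0.1 * P2 p0.2 := by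
      rcases mul_pos_iff.1 hp0 with ⟨h1, _⟩ | ⟨h1, _⟩
      · exact h1
      · exact absurd h1 (not_lt.2 ha)
    have hw : 0 < W p0.1 p0.2 z := by
      rcases mul_pos_iff.1 hp0 with ⟨_, h2⟩ | ⟨h1, _⟩
      · exact h2
      · exact absurd h1 (not_lt.2 ha)
    have h3 : 0 < ∑ p : X1 × X2, (P1 p.1 * P2 p.2) * W p.1 p.2 z ^ (1+s) :=
      Finset.sum_pos'
        (fun p _ => mul_nonneg (mul_nonneg (hP10 _) (hP20 _))
          (Real.rpow_nonneg (hW0 _ _ _) _))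
        ⟨p0, Finset.mem_univ p0, mul_pos hp (Real.rpow_pos_of_pos hw _)⟩
    rwa [Fintype.sum_prod_type] at h3
  -- positivity of the three "T" sums
  have hT1pos : 0 < ∑ z, PZ z ^ (-s) *
      ∑ x1, P1 x1 * (∑ x2, P2 x2 * W x1 x2 z) ^ (1+s) :=
    Finset.sum_pos (fun z _ => mul_pos (Real.rpow_pos_of_pos (hPZpos z) _) (hG1pos z))
      Finset.univ_nonempty
  have hT2pos : 0 < ∑ z, PZ z ^ (-s) *
      ∑ x2, P2 x2 * (∑ x1, P1 x1 * W x1 x2 z) ^ (1+s) :=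
    Finset.sum_pos (fun z _ => mul_pos (Real.rpow_pos_of_pos (hPZpos z) _) (hG2pos z))
      Finset.univ_nonempty
  have hT12pos : 0 < ∑ z, PZ z ^ (-s) *
      ∑ x1, ∑ x2, (P1 x1 * P2 x2) * W x1 x2 z ^ (1+s) :=
    Finset.sum_pos (fun z _ => mul_pos (Real.rpow_pos_of_pos (hPZpos z) _) (hG12pos z))
      Finset.univ_nonempty
  -- identification of the exponentials
  have hexp1 : Real.exp (s * renyiD s
      (fun p : Z × X1 => ∑ x2, P1 p.2 * P2 x2 * W p.2 x2 p.1)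
      (fun p : Z × X1 => PZ p.1 * P1 p.2))
      = ∑ z, PZ z ^ (-s) * ∑ x1, P1 x1 * (∑ x2, P2 x2 * W x1 x2 z) ^ (1+s) := by
    have hsum : ∑ p : Z × X1, (∑ x2, P1 p.2 * P2 x2 * W p.2 x2 p.1) ^ (1+s) *
        (PZ p.1 * P1 p.2) ^ (-s)
        = ∑ z, PZ z ^ (-s) * ∑ x1, P1 x1 * (∑ x2, P2 x2 * W x1 x2 z) ^ (1+s) := by
      rw [Fintype.sum_prod_type]
      refine Finset.sum_congr rfl fun z _ => ?_
      rw [Finset.mul_sum]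
      refine Finset.sum_congr rfl fun x1 _ => ?_
      have hfac : ∑ x2, P1 x1 * P2 x2 * W x1 x2 z = P1 x1 * ∑ x2, P2 x2 * W x1 x2 z := by
        rw [Finset.mul_sum]
        exact Finset.sum_congr rfl fun x2 _ => by ring
      rw [hfac]
      exact resolv_term (hP10 x1) (hW1nn x1 z) (hPZpos z) hs0
    simp only [renyiD]
    rw [hsum, ← mul_assoc, mul_one_div, div_self hsne, one_mul, Real.exp_log hT1pos]
  have hexp2 : Real.exp (s * renyiD s
      (fun p : Z × X2 => ∑ x1, P1 x1 * P2 p.2 * W x1 p.2 p.1)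
      (fun p : Z × X2 => PZ p.1 * P2 p.2))
      = ∑ z, PZ z ^ (-s) * ∑ x2, P2 x2 * (∑ x1, P1 x1 * W x1 x2 z) ^ (1+s) := by
    have hsum : ∑ p : Z × X2, (∑ x1, P1 x1 * P2 p.2 * W x1 p.2 p.1) ^ (1+s) *
        (PZ p.1 * P2 p.2) ^ (-s)
        = ∑ z, PZ z ^ (-s) * ∑ x2, P2 x2 * (∑ x1, P1 x1 * W x1 x2 z) ^ (1+s) := by
      rw [Fintype.sum_prod_type]
      refine Finset.sum_congr rfl fun z _ => ?_
      rw [Finset.mul_sum]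
      refine Finset.sum_congr rfl fun x2 _ => ?_
      have hfac : ∑ x1, P1 x1 * P2 x2 * W x1 x2 z = P2 x2 * ∑ x1, P1 x1 * W x1 x2 z := by
        rw [Finset.mul_sum]
        exact Finset.sum_congr rfl fun x1 _ => by ring
      rw [hfac]
      exact resolv_term (hP20 x2) (hW2nn x2 z) (hPZpos z) hs0
    simp only [renyiD]
    rw [hsum, ← mul_assoc, mul_one_div, div_self hsne, one_mul, Real.exp_log hT2pos]
  have hexp12 : Real.exp (s * renyiD s
      (fun p : Z × (X1 × X2) => P1 p.2.1 * P2 p.2.2 * W p.2.1 p.2.2 p.1)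
      (fun p : Z × (X1 × X2) => PZ p.1 * (P1 p.2.1 * P2 p.2.2)))
      = ∑ z, PZ z ^ (-s) * ∑ x1, ∑ x2, (P1 x1 * P2 x2) * W x1 x2 z ^ (1+s) := by
    have hsum : ∑ p : Z × (X1 × X2), (P1 p.2.1 * P2 p.2.2 * W p.2.1 p.2.2 p.1) ^ (1+s) *
        (PZ p.1 * (P1 p.2.1 * P2 p.2.2)) ^ (-s)
        = ∑ z, PZ z ^ (-s) * ∑ x1, ∑ x2, (P1 x1 * P2 x2) * W x1 x2 z ^ (1+s) := by
      rw [Fintype.sum_prod_type]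
      refine Finset.sum_congr rfl fun z _ => ?_
      rw [Fintype.sum_prod_type, Finset.mul_sum]
      refine Finset.sum_congr rfl fun x1 _ => ?_
      rw [Finset.mul_sum]
      refine Finset.sum_congr rfl fun x2 _ => ?_
      exact resolv_term (mul_nonneg (hP10 x1) (hP20 x2)) (hW0 x1 x2 z) (hPZpos z) hs0
    simp only [renyiD]
    rw [hsum, ← mul_assoc, mul_one_div, div_self hsne, one_mul, Real.exp_log hT12pos]
  rw [hexp1, hexp2, hexp12]
  -- rewrite the left-hand side as an expected log
  have hstepA : s * (∑ C1 : Fin L1 → X1, ∑ C2 : Fin L2 → X2,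
      (∏ j, P1 (C1 j)) * (∏ j, P2 (C2 j)) *
        renyiD s
          (fun z => (1 / ((L1 : ℝ) * (L2 : ℝ))) * ∑ j1, ∑ j2, W (C1 j1) (C2 j2) z) PZ)
      = ∑ p : (Fin L1 → X1) × (Fin L2 → X2),
          ((∏ j, P1 (p.1 j)) * (∏ j, P2 (p.2 j))) *
            Real.log (∑ z, ((1 / ((L1 : ℝ) * (L2 : ℝ))) *
              ∑ j1, ∑ j2, W (p.1 j1) (p.2 j2) z) ^ (1+s) * PZ z ^ (-s)) := by
    rw [Fintype.sum_prod_type, Finset.mul_sum]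
    refine Finset.sum_congr rfl fun C1 _ => ?_
    rw [Finset.mul_sum]
    refine Finset.sum_congr rfl fun C2 _ => ?_
    simp only [renyiD]
    field_simp
  rw [hstepA]
  -- weights
  have hw0 : ∀ p : (Fin L1 → X1) × (Fin L2 → X2),
      (0:ℝ) ≤ (∏ j, P1 (p.1 j)) * (∏ j, P2 (p.2 j)) :=
    fun p => mul_nonneg (Finset.prod_nonneg fun _ _ => hP10 _)
      (Finset.prod_nonneg fun _ _ => hP20 _)
  have hw1 : ∑ p : (Fin L1 → X1) × (Fin L2 → X2),
      (∏ j, P1 (p.1 j)) * (∏ j, P2 (p.2 j)) = 1 := by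
    rw [Fintype.sum_prod_type]
    calc ∑ C1 : Fin L1 → X1, ∑ C2 : Fin L2 → X2, (∏ j, P1 (C1 j)) * (∏ j, P2 (C2 j))
        = ∑ C1 : Fin L1 → X1, (∏ j, P1 (C1 j)) * ∑ C2 : Fin L2 → X2, ∏ j, P2 (C2 j) :=
          Finset.sum_congr rfl fun C1 _ => (Finset.mul_sum _ _ _).symm
      _ = 1 := by
          rw [resolv_sum_prod hP21]
          simpa using resolv_sum_prod (ι := Fin L1) hP11
  -- positivity of the argument of the log
  have hFnn : ∀ (p : (Fin L1 → X1) × (Fin L2 → X2)) (z : Z),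
      (0:ℝ) ≤ ∑ j1, ∑ j2, W (p.1 j1) (p.2 j2) z :=
    fun p z => Finset.sum_nonneg fun j1 _ => Finset.sum_nonneg fun j2 _ => hW0 _ _ _
  have hapos : ∀ p : (Fin L1 → X1) × (Fin L2 → X2),
      0 < ∑ z, ((1 / ((L1 : ℝ) * (L2 : ℝ))) *
        ∑ j1, ∑ j2, W (p.1 j1) (p.2 j2) z) ^ (1+s) * PZ z ^ (-s) := by
    intro p
    have hFsum : ∑ z, ∑ j1, ∑ j2, W (p.1 j1) (p.2 j2) z = (L1:ℝ) * (L2:ℝ) := by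
      rw [Finset.sum_comm]
      calc ∑ j1 : Fin L1, ∑ z, ∑ j2, W (p.1 j1) (p.2 j2) z
          = ∑ j1 : Fin L1, ∑ j2 : Fin L2, ∑ z, W (p.1 j1) (p.2 j2) z :=
            Finset.sum_congr rfl fun j1 _ => Finset.sum_comm
        _ = ∑ _j1 : Fin L1, ∑ _j2 : Fin L2, (1:ℝ) :=
            Finset.sum_congr rfl fun j1 _ => Finset.sum_congr rfl fun j2 _ => hW1 _ _
        _ = (L1:ℝ) * (L2:ℝ) := by
            simp [Finset.sum_const, Finset.card_univ, mul_comm]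
    have hex : ∃ z, 0 < ∑ j1, ∑ j2, W (p.1 j1) (p.2 j2) z := by
      by_contra h; push_neg at h
      have h2 : ∑ z, ∑ j1, ∑ j2, W (p.1 j1) (p.2 j2) z ≤ 0 :=
        Finset.sum_nonpos fun z _ => h z
      rw [hFsum] at h2
      exact absurd h2 (not_le.2 hNpos)
    obtain ⟨z0, hz0⟩ := hex
    refine Finset.sum_pos'
      (fun z _ => mul_nonneg (Real.rpow_nonneg
        (mul_nonneg (by positivity) (hFnn p z)) _)
        (Real.rpow_nonneg (hPZpos z).le _))
      ⟨z0, Finset.mem_univ z0, mul_pos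
        (Real.rpow_pos_of_pos (mul_pos (by positivity) hz0) _)
        (Real.rpow_pos_of_pos (hPZpos z0) _)⟩
  -- the main bound on the expected sum
  have hB : ∑ p : (Fin L1 → X1) × (Fin L2 → X2),
      ((∏ j, P1 (p.1 j)) * (∏ j, P2 (p.2 j))) *
        (∑ z, ((1 / ((L1 : ℝ) * (L2 : ℝ))) *
          ∑ j1, ∑ j2, W (p.1 j1) (p.2 j2) z) ^ (1+s) * PZ z ^ (-s))
      ≤ 1 + ((L1 : ℝ) ^ (-s) *
            (∑ z, PZ z ^ (-s) * ∑ x1, P1 x1 * (∑ x2, P2 x2 * W x1 x2 z) ^ (1+s))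
        + (L2 : ℝ) ^ (-s) *
            (∑ z, PZ z ^ (-s) * ∑ x2, P2 x2 * (∑ x1, P1 x1 * W x1 x2 z) ^ (1+s))
        + ((L1 : ℝ) * (L2 : ℝ)) ^ (-s) *
            (∑ z, PZ z ^ (-s) * ∑ x1, ∑ x2, (P1 x1 * P2 x2) * W x1 x2 z ^ (1+s))) := by
    -- Step C: reorganize as a sum over z
    have hC : ∑ p : (Fin L1 → X1) × (Fin L2 → X2),
        ((∏ j, P1 (p.1 j)) * (∏ j, P2 (p.2 j))) *
          (∑ z, ((1 / ((L1 : ℝ) * (L2 : ℝ))) *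
            ∑ j1, ∑ j2, W (p.1 j1) (p.2 j2) z) ^ (1+s) * PZ z ^ (-s))
        = ∑ z, PZ z ^ (-s) * ((1 / ((L1 : ℝ) * (L2 : ℝ))) ^ (1+s) *
            ∑ p : (Fin L1 → X1) × (Fin L2 → X2),
              ((∏ j, P1 (p.1 j)) * (∏ j, P2 (p.2 j))) *
                (∑ j1, ∑ j2, W (p.1 j1) (p.2 j2) z) ^ (1+s)) := by
      calc ∑ p : (Fin L1 → X1) × (Fin L2 → X2),
            ((∏ j, P1 (p.1 j)) * (∏ j, P2 (p.2 j))) *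
              (∑ z, ((1 / ((L1 : ℝ) * (L2 : ℝ))) *
                ∑ j1, ∑ j2, W (p.1 j1) (p.2 j2) z) ^ (1+s) * PZ z ^ (-s))
          = ∑ p : (Fin L1 → X1) × (Fin L2 → X2), ∑ z,
              PZ z ^ (-s) * ((1 / ((L1 : ℝ) * (L2 : ℝ))) ^ (1+s) *
                (((∏ j, P1 (p.1 j)) * (∏ j, P2 (p.2 j))) *
                  (∑ j1, ∑ j2, W (p.1 j1) (p.2 j2) z) ^ (1+s))) := by
            refine Finset.sum_congr rfl fun p _ => ?_
            rw [Finset.mul_sum]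
            refine Finset.sum_congr rfl fun z _ => ?_
            rw [Real.mul_rpow (by positivity) (hFnn p z)]
            ring
        _ = ∑ z, ∑ p : (Fin L1 → X1) × (Fin L2 → X2),
              PZ z ^ (-s) * ((1 / ((L1 : ℝ) * (L2 : ℝ))) ^ (1+s) *
                (((∏ j, P1 (p.1 j)) * (∏ j, P2 (p.2 j))) *
                  (∑ j1, ∑ j2, W (p.1 j1) (p.2 j2) z) ^ (1+s))) := Finset.sum_comm
        _ = ∑ z, PZ z ^ (-s) * ((1 / ((L1 : ℝ) * (L2 : ℝ))) ^ (1+s) *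
              ∑ p : (Fin L1 → X1) × (Fin L2 → X2),
                ((∏ j, P1 (p.1 j)) * (∏ j, P2 (p.2 j))) *
                  (∑ j1, ∑ j2, W (p.1 j1) (p.2 j2) z) ^ (1+s)) := by
            refine Finset.sum_congr rfl fun z _ => ?_
            rw [Finset.mul_sum, Finset.mul_sum]
    rw [hC]
    -- Step D: per-z bound
    have hD : ∀ z, ∑ p : (Fin L1 → X1) × (Fin L2 → X2),
        ((∏ j, P1 (p.1 j)) * (∏ j, P2 (p.2 j))) *
          (∑ j1, ∑ j2, W (p.1 j1) (p.2 j2) z) ^ (1+s)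
        ≤ ((L1 : ℝ) * (L2 : ℝ)) *
            ((∑ x1, ∑ x2, (P1 x1 * P2 x2) * W x1 x2 z ^ (1 + s))
              + (L2 : ℝ) ^ s * ∑ x1, P1 x1 * (∑ x2, P2 x2 * W x1 x2 z) ^ (1 + s)
              + (L1 : ℝ) ^ s * ∑ x2, P2 x2 * (∑ x1, P1 x1 * W x1 x2 z) ^ (1 + s)
              + ((L1 : ℝ) * (L2 : ℝ)) ^ s *
                  (∑ x1, ∑ x2, P1 x1 * P2 x2 * W x1 x2 z) ^ (1 + s)) := by
      intro z
      have hexpand : ∑ p : (Fin L1 → X1) × (Fin L2 → X2),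
          ((∏ j, P1 (p.1 j)) * (∏ j, P2 (p.2 j))) *
            (∑ j1, ∑ j2, W (p.1 j1) (p.2 j2) z) ^ (1+s)
          = ∑ j1 : Fin L1, ∑ j2 : Fin L2,
              ∑ p : (Fin L1 → X1) × (Fin L2 → X2),
                ((∏ j, P1 (p.1 j)) * (∏ j, P2 (p.2 j))) *
                  (W (p.1 j1) (p.2 j2) z *
                    (∑ k1, ∑ k2, W (p.1 k1) (p.2 k2) z) ^ s) := by
        calc ∑ p : (Fin L1 → X1) × (Fin L2 → X2),
              ((∏ j, P1 (p.1 j)) * (∏ j, P2 (p.2 j))) *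
                (∑ j1, ∑ j2, W (p.1 j1) (p.2 j2) z) ^ (1+s)
            = ∑ p : (Fin L1 → X1) × (Fin L2 → X2), ∑ j1 : Fin L1, ∑ j2 : Fin L2,
                ((∏ j, P1 (p.1 j)) * (∏ j, P2 (p.2 j))) *
                  (W (p.1 j1) (p.2 j2) z *
                    (∑ k1, ∑ k2, W (p.1 k1) (p.2 k2) z) ^ s) := by
              refine Finset.sum_congr rfl fun p _ => ?_
              rw [Real.rpow_one_add' (hFnn p z) h1sne]
              have hFF : (∑ j1, ∑ j2, W (p.1 j1) (p.2 j2) z) *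
                  (∑ k1, ∑ k2, W (p.1 k1) (p.2 k2) z) ^ s
                  = ∑ j1 : Fin L1, ∑ j2 : Fin L2, W (p.1 j1) (p.2 j2) z *
                      (∑ k1, ∑ k2, W (p.1 k1) (p.2 k2) z) ^ s := by
                rw [Finset.sum_mul]
                exact Finset.sum_congr rfl fun j1 _ => Finset.sum_mul _ _ _
              rw [hFF, Finset.mul_sum]
              exact Finset.sum_congr rfl fun j1 _ => Finset.mul_sum _ _ _
          _ = ∑ j1 : Fin L1, ∑ p : (Fin L1 → X1) × (Fin L2 → X2), ∑ j2 : Fin L2,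
                ((∏ j, P1 (p.1 j)) * (∏ j, P2 (p.2 j))) *
                  (W (p.1 j1) (p.2 j2) z *
                    (∑ k1, ∑ k2, W (p.1 k1) (p.2 k2) z) ^ s) := Finset.sum_comm
          _ = ∑ j1 : Fin L1, ∑ j2 : Fin L2,
                ∑ p : (Fin L1 → X1) × (Fin L2 → X2),
                ((∏ j, P1 (p.1 j)) * (∏ j, P2 (p.2 j))) *
                  (W (p.1 j1) (p.2 j2) z *
                    (∑ k1, ∑ k2, W (p.1 k1) (p.2 k2) z) ^ s) :=
              Finset.sum_congr rfl fun j1 _ => Finset.sum_comm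
      rw [hexpand]
      calc ∑ j1 : Fin L1, ∑ j2 : Fin L2,
            ∑ p : (Fin L1 → X1) × (Fin L2 → X2),
              ((∏ j, P1 (p.1 j)) * (∏ j, P2 (p.2 j))) *
                (W (p.1 j1) (p.2 j2) z *
                  (∑ k1, ∑ k2, W (p.1 k1) (p.2 k2) z) ^ s)
          ≤ ∑ _j1 : Fin L1, ∑ _j2 : Fin L2,
              ((∑ x1, ∑ x2, (P1 x1 * P2 x2) * W x1 x2 z ^ (1 + s))
                + (L2 : ℝ) ^ s * ∑ x1, P1 x1 * (∑ x2, P2 x2 * W x1 x2 z) ^ (1 + s)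
                + (L1 : ℝ) ^ s * ∑ x2, P2 x2 * (∑ x1, P1 x1 * W x1 x2 z) ^ (1 + s)
                + ((L1 : ℝ) * (L2 : ℝ)) ^ s *
                    (∑ x1, ∑ x2, P1 x1 * P2 x2 * W x1 x2 z) ^ (1 + s)) :=
            Finset.sum_le_sum fun j1 _ => Finset.sum_le_sum fun j2 _ =>
              resolv_core W hW0 P1 hP10 hP11 P2 hP20 hP21 j1 j2 hs0 hs1 z
        _ = ((L1 : ℝ) * (L2 : ℝ)) *
              ((∑ x1, ∑ x2, (P1 x1 * P2 x2) * W x1 x2 z ^ (1 + s))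
                + (L2 : ℝ) ^ s * ∑ x1, P1 x1 * (∑ x2, P2 x2 * W x1 x2 z) ^ (1 + s)
                + (L1 : ℝ) ^ s * ∑ x2, P2 x2 * (∑ x1, P1 x1 * W x1 x2 z) ^ (1 + s)
                + ((L1 : ℝ) * (L2 : ℝ)) ^ s *
                    (∑ x1, ∑ x2, P1 x1 * P2 x2 * W x1 x2 z) ^ (1 + s)) := by
            rw [Finset.sum_const, Finset.sum_const, Finset.card_univ, Finset.card_univ,
              Fintype.card_fin, Fintype.card_fin, smul_smul, nsmul_eq_mul, Nat.cast_mul]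
    -- combine
    calc ∑ z, PZ z ^ (-s) * ((1 / ((L1 : ℝ) * (L2 : ℝ))) ^ (1+s) *
            ∑ p : (Fin L1 → X1) × (Fin L2 → X2),
              ((∏ j, P1 (p.1 j)) * (∏ j, P2 (p.2 j))) *
                (∑ j1, ∑ j2, W (p.1 j1) (p.2 j2) z) ^ (1+s))
        ≤ ∑ z, PZ z ^ (-s) * ((1 / ((L1 : ℝ) * (L2 : ℝ))) ^ (1+s) *
            (((L1 : ℝ) * (L2 : ℝ)) *
              ((∑ x1, ∑ x2, (P1 x1 * P2 x2) * W x1 x2 z ^ (1 + s))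
                + (L2 : ℝ) ^ s * ∑ x1, P1 x1 * (∑ x2, P2 x2 * W x1 x2 z) ^ (1 + s)
                + (L1 : ℝ) ^ s * ∑ x2, P2 x2 * (∑ x1, P1 x1 * W x1 x2 z) ^ (1 + s)
                + ((L1 : ℝ) * (L2 : ℝ)) ^ s *
                    (∑ x1, ∑ x2, P1 x1 * P2 x2 * W x1 x2 z) ^ (1 + s)))) :=
          Finset.sum_le_sum fun z _ => mul_le_mul_of_nonneg_left
            (mul_le_mul_of_nonneg_left (hD z) (by positivity))
            (Real.rpow_nonneg (hPZpos z).le _)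
      _ = ∑ z, (PZ z + (L1 : ℝ) ^ (-s) *
              (PZ z ^ (-s) * ∑ x1, P1 x1 * (∑ x2, P2 x2 * W x1 x2 z) ^ (1+s))
            + (L2 : ℝ) ^ (-s) *
              (PZ z ^ (-s) * ∑ x2, P2 x2 * (∑ x1, P1 x1 * W x1 x2 z) ^ (1+s))
            + ((L1 : ℝ) * (L2 : ℝ)) ^ (-s) *
              (PZ z ^ (-s) * ∑ x1, ∑ x2, (P1 x1 * P2 x2) * W x1 x2 z ^ (1+s))) := by
          refine Finset.sum_congr rfl fun z _ => ?_
          have halg := resolv_algebra (s := s)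
            (g1 := ∑ x1, P1 x1 * (∑ x2, P2 x2 * W x1 x2 z) ^ (1+s))
            (g2 := ∑ x2, P2 x2 * (∑ x1, P1 x1 * W x1 x2 z) ^ (1+s))
            (g12 := ∑ x1, ∑ x2, (P1 x1 * P2 x2) * W x1 x2 z ^ (1+s))
            hL1R hL2R (hPZpos z)
          rw [← hPZ z]
          exact halg
      _ = (∑ z, PZ z) + ((L1 : ℝ) ^ (-s) *
              (∑ z, PZ z ^ (-s) * ∑ x1, P1 x1 * (∑ x2, P2 x2 * W x1 x2 z) ^ (1+s))
            + (L2 : ℝ) ^ (-s) *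
              (∑ z, PZ z ^ (-s) * ∑ x2, P2 x2 * (∑ x1, P1 x1 * W x1 x2 z) ^ (1+s))
            + ((L1 : ℝ) * (L2 : ℝ)) ^ (-s) *
              (∑ z, PZ z ^ (-s) * ∑ x1, ∑ x2, (P1 x1 * P2 x2) * W x1 x2 z ^ (1+s))) := by
          rw [Finset.sum_add_distrib, Finset.sum_add_distrib, Finset.sum_add_distrib,
            Finset.mul_sum, Finset.mul_sum, Finset.mul_sum]
          ring
      _ = 1 + ((L1 : ℝ) ^ (-s) *
              (∑ z, PZ z ^ (-s) * ∑ x1, P1 x1 * (∑ x2, P2 x2 * W x1 x2 z) ^ (1+s))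
            + (L2 : ℝ) ^ (-s) *
              (∑ z, PZ z ^ (-s) * ∑ x2, P2 x2 * (∑ x1, P1 x1 * W x1 x2 z) ^ (1+s))
            + ((L1 : ℝ) * (L2 : ℝ)) ^ (-s) *
              (∑ z, PZ z ^ (-s) * ∑ x1, ∑ x2, (P1 x1 * P2 x2) * W x1 x2 z ^ (1+s))) := by
          have hPZsum : ∑ z, PZ z = 1 := by
            calc ∑ z, PZ z = ∑ z, ∑ x1, ∑ x2, P1 x1 * P2 x2 * W x1 x2 z :=
                  Finset.sum_congr rfl fun z _ => hPZ z
              _ = ∑ x1, ∑ z, ∑ x2, P1 x1 * P2 x2 * W x1 x2 z := Finset.sum_comm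
              _ = ∑ x1, ∑ x2, ∑ z, P1 x1 * P2 x2 * W x1 x2 z :=
                  Finset.sum_congr rfl fun x1 _ => Finset.sum_comm
              _ = ∑ x1, ∑ x2, P1 x1 * P2 x2 := by
                  refine Finset.sum_congr rfl fun x1 _ =>
                    Finset.sum_congr rfl fun x2 _ => ?_
                  rw [← Finset.mul_sum, hW1 x1 x2, mul_one]
              _ = 1 := by
                  rw [← Finset.sum_mul_sum]
                  rw [hP11, hP21, one_mul]
          rw [hPZsum]
  exact resolv_logsum_le
    (fun p : (Fin L1 → X1) × (Fin L2 → X2) => (∏ j, P1 (p.1 j)) * (∏ j, P2 (p.2 j)))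
    (fun p : (Fin L1 → X1) × (Fin L2 → X2) =>
      ∑ z, ((1 / ((L1 : ℝ) * (L2 : ℝ))) *
        ∑ j1, ∑ j2, W (p.1 j1) (p.2 j2) z) ^ (1+s) * PZ z ^ (-s))
    hw0 hw1 hapos hB
end

section
/- Let 𝒴, 𝒳₁, 𝒳₂ be finite sets, let W(y|x₁,x₂) be a channel (a pmf on 𝒴 for each (x₁,x₂)), let P_{X₁}, P_{X₂} be pmfs, and let N be a positive integer. Let X_{2,1},…,X_{2,N} be i.i.d. according to P_{X₂}, let X₁ be distributed according to P_{X₁} independently of them, let the message J be uniform on {1,…,N} independently of everything else, and let Y be generated according to W(·|X₁, X_{2,J}). Consider any maximum-likelihood decoder, i.e., any function Ĵ of the codebook realization and of (X₁, Y) that always outputs an index j maximizing W(Y|X₁, X_{2,j}) over j ∈ {1,…,N}. Then for every s ∈ [0,1], the average error probability satisfies Pr[Ĵ ≠ J] ≤ N^s · exp( −s · I↑_{1/(1+s)}(Y; X₂ | X₁) ), where exp( −s · I↑_{1/(1+s)}(Y; X₂ | X₁) ) := ∑_{x₁} P_{X₁}(x₁) ∑_y ( ∑_{x₂} P_{X₂}(x₂)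 · W(y|x₁,x₂)^{1/(1+s)} )^{1+s}. -/
open scoped BigOperators

open Finset in
/-- Jensen's inequality for `t ↦ t^s`, `s ∈ [0,1]`. -/
lemma aux_jensen_rpow {ι : Type*} (t : Finset ι) (w z : ι → ℝ) (hw : ∀ i ∈ t, 0 ≤ w i)
    (hw1 : ∑ i ∈ t, w i = 1) (hz : ∀ i ∈ t, 0 ≤ z i) {s : ℝ} (hs0 : 0 ≤ s) (hs1 : s ≤ 1) :
    ∑ i ∈ t, w i * z i ^ s ≤ (∑ i ∈ t, w i * z i) ^ s := by
  rcases eq_or_lt_of_le hs0 with h0 | h0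
  · simp [← h0, hw1]
  · have hp : 1 ≤ 1 / s := by rw [le_div_iff₀ h0]; linarith
    have key := Real.arith_mean_le_rpow_mean t w (fun i => z i ^ s) hw hw1
      (fun i hi => Real.rpow_nonneg (hz i hi) s) hp
    calc ∑ i ∈ t, w i * z i ^ s
        ≤ (∑ i ∈ t, w i * (z i ^ s) ^ (1 / s)) ^ (1 / (1 / s)) := key
      _ = (∑ i ∈ t, w i * z i) ^ s := by
          rw [one_div_one_div]
          congr 1
          refine Finset.sum_congr rfl fun i hi => ?_
          rw [← Real.rpow_mul (hz i hi), mul_one_div_cancel h0.ne', Real.rpow_one]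

open Finset in
/-- Expectation (under an i.i.d. product weight) of a function of a single coordinate. -/
lemma aux_exp_single {ι X : Type*} [Fintype ι] [Fintype X] [DecidableEq ι]
    (p : X → ℝ) (hp1 : ∑ a, p a = 1) (f : X → ℝ) (k : ι) :
    ∑ g : ι → X, (∏ m, p (g m)) * f (g k) = ∑ a, p a * f a := by
  have h : ∀ g : ι → X, (∏ m, p (g m)) * f (g k)
      = ∏ m, (p (g m) * (if m = k then f (g m) else 1)) := by
    intro g
    rw [Finset.prod_mul_distrib, Finset.prod_ite_eq' Finset.univ k (fun m => f (g m))]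
    simp
  simp_rw [h]
  rw [← Fintype.prod_sum (fun m a => p a * (if m = k then f a else 1))]
  rw [Finset.prod_eq_single k]
  · simp
  · intro m _ hm
    simp only [if_neg hm, mul_one]
    exact hp1
  · simp

open Finset in
/-- Independence factorization: the expectation of (function of coordinate `j`) times
(function of the other coordinates) factorizes. -/
lemma aux_factor_split {N : ℕ} {X : Type*} [Fintype X] (p : X → ℝ) (j : Fin N)
    (f : X → ℝ) (h : ({k : Fin N // k ≠ j} → X) → ℝ) :
    ∑ C : Fin N → X, (∏ k, p (C k)) * (f (C j) * h (fun k => C k.1))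
      = (∑ a, p a * f a) *
        ∑ g : {k : Fin N // k ≠ j} → X, (∏ k, p (g k)) * h g := by
  rw [← Equiv.sum_comp (Equiv.funSplitAt j X).symm
    (fun C => (∏ k, p (C k)) * (f (C j) * h (fun k => C k.1)))]
  rw [Fintype.sum_prod_type, Finset.sum_mul_sum]
  refine Finset.sum_congr rfl fun a _ => Finset.sum_congr rfl fun g _ => ?_
  have hCj : (Equiv.funSplitAt j X).symm (a, g) j = a := by
    simp [Equiv.funSplitAt_symm_apply]
  have hCk : ∀ k : {k : Fin N // k ≠ j}, (Equiv.funSplitAt j X).symm (a, g) k.1 = g k := by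
    intro k
    simp [Equiv.funSplitAt_symm_apply, k.2]
  have hprod : (∏ k, p ((Equiv.funSplitAt j X).symm (a, g) k))
      = p a * ∏ k : {k : Fin N // k ≠ j}, p (g k) := by
    rw [← Finset.mul_prod_erase Finset.univ _ (Finset.mem_univ j), hCj]
    congr 1
    rw [Finset.prod_subtype (p := fun k => k ≠ j) (Finset.univ.erase j)
      (fun x => by simp) (fun k => p ((Equiv.funSplitAt j X).symm (a, g) k))]
    exact Finset.prod_congr rfl fun k _ => by rw [hCk k]
  have hrest : (fun k : {k : Fin N // k ≠ j} => (Equiv.funSplitAt j X).symm (a, g) k.1) = g :=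
    funext fun k => hCk k
  rw [hprod, hCj, hrest]
  ring

/-- Lemma 3, generalized Gallager bound for a two-transmitter MAC with one
input known at the receiver: for every `s ∈ [0,1]` and every maximum-likelihood decoder,
`Pr[Ĵ ≠ J] ≤ N^s · exp(−s I↑_{1/(1+s)}(Y;X₂|X₁))`, where
`exp(−s I↑_{1/(1+s)}(Y;X₂|X₁)) = ∑_{x₁} P_{X₁}(x₁) ∑_y (∑_{x₂} P_{X₂}(x₂) W(y|x₁,x₂)^{1/(1+s)})^{1+s}`. -/
theorem gallager_two_MAC
    {Y X1 X2 : Type*} [Fintype Y] [Fintype X1] [Fintype X2]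
    (W : X1 → X2 → Y → ℝ)
    (hW0 : ∀ x1 x2 y, 0 ≤ W x1 x2 y) (hW1 : ∀ x1 x2, ∑ y, W x1 x2 y = 1)
    (P1 : X1 → ℝ) (hP10 : ∀ x, 0 ≤ P1 x) (hP11 : ∑ x, P1 x = 1)
    (P2 : X2 → ℝ) (hP20 : ∀ x, 0 ≤ P2 x) (hP21 : ∑ x, P2 x = 1)
    (N : ℕ) (hN : 0 < N)
    (dec : (Fin N → X2) → X1 → Y → Fin N)
    (hdec : ∀ (C : Fin N → X2) (x1 : X1) (y : Y) (j : Fin N), W x1 (C j) y ≤ W x1 (C (dec C x1 y)) y)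
    (s : ℝ) (hs : s ∈ Set.Icc (0 : ℝ) 1) :
    (∑ C : Fin N → X2, (∏ j, P2 (C j)) *
        ∑ x1, P1 x1 * ((1 / (N : ℝ)) *
          ∑ j, ∑ y, W x1 (C j) y * (if dec C x1 y = j then 0 else 1)))
      ≤ (N : ℝ) ^ s *
          ∑ x1, P1 x1 * ∑ y, (∑ x2, P2 x2 * W x1 x2 y ^ (1 / (1 + s))) ^ (1 + s) := by
  obtain ⟨hs0, hs1⟩ := hs
  have h1s : (0:ℝ) < 1 + s := by linarith
  set α : ℝ := 1 / (1 + s) with hα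
  have hα0 : 0 < α := by positivity
  have hαs : α * (1 + s) = 1 := by rw [hα]; field_simp
  -- the per-realization Gallager term
  set T : (Fin N → X2) → X1 → Fin N → Y → ℝ := fun C x1 j y =>
    W x1 (C j) y ^ α * (∑ j' ∈ Finset.univ.erase j, W x1 (C j') y ^ α) ^ s with hT
  -- Step 1: pointwise bound
  have step1 : ∀ (C : Fin N → X2) (x1 : X1) (y : Y) (j : Fin N),
      W x1 (C j) y * (if dec C x1 y = j then 0 else 1) ≤ T C x1 j y := by
    intro C x1 y j
    have hTnn : 0 ≤ T C x1 j y := by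
      apply mul_nonneg (Real.rpow_nonneg (hW0 _ _ _) _)
      exact Real.rpow_nonneg (Finset.sum_nonneg fun i _ => Real.rpow_nonneg (hW0 _ _ _) _) _
    by_cases hd : dec C x1 y = j
    · simpa [hd] using hTnn
    · rw [if_neg hd, mul_one]
      have hWj : 0 ≤ W x1 (C j) y := hW0 _ _ _
      rcases eq_or_lt_of_le hWj with h0 | h0
      · rw [← h0]; exact hTnn
      · have hmem : dec C x1 y ∈ Finset.univ.erase j :=
          Finset.mem_erase.2 ⟨hd, Finset.mem_univ _⟩
        have h2 : W x1 (C j) y ^ α ≤ ∑ j' ∈ Finset.univ.erase j, W x1 (C j') y ^ α :=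
          calc W x1 (C j) y ^ α ≤ W x1 (C (dec C x1 y)) y ^ α :=
                Real.rpow_le_rpow hWj (hdec C x1 y j) hα0.le
            _ ≤ _ := Finset.single_le_sum
                (fun i _ => Real.rpow_nonneg (hW0 _ _ _) α) hmem
      -- W = W^α * (W^α)^s ≤ W^α * S^s
        have key : W x1 (C j) y ^ α * (W x1 (C j) y ^ α) ^ s = W x1 (C j) y := by
          nth_rewrite 1 [← Real.rpow_one (W x1 (C j) y ^ α)]
          rw [← Real.rpow_add (Real.rpow_pos_of_pos h0 α), ← Real.rpow_mul hWj, hαs,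
            Real.rpow_one]
        calc W x1 (C j) y = W x1 (C j) y ^ α * (W x1 (C j) y ^ α) ^ s := key.symm
          _ ≤ T C x1 j y := by
              apply mul_le_mul_of_nonneg_left _ (Real.rpow_nonneg hWj α)
              exact Real.rpow_le_rpow (Real.rpow_nonneg hWj α) h2 hs0
  -- Step 2: monotonicity
  have step2 : (∑ C : Fin N → X2, (∏ j, P2 (C j)) *
        ∑ x1, P1 x1 * ((1 / (N : ℝ)) *
          ∑ j, ∑ y, W x1 (C j) y * (if dec C x1 y = j then 0 else 1)))
      ≤ ∑ C : Fin N → X2, (∏ j, P2 (C j)) *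
        ∑ x1, P1 x1 * ((1 / (N : ℝ)) * ∑ j, ∑ y, T C x1 j y) := by
    gcongr with C _ x1 _ j _ y _ <;>
      first
        | exact step1 _ _ _ _
        | exact hP10 _
        | exact Finset.prod_nonneg fun k _ => hP20 _
        | positivity
  -- Step 3: swap the expectation over codebooks inside
  have step3 : (∑ C : Fin N → X2, (∏ j, P2 (C j)) *
        ∑ x1, P1 x1 * ((1 / (N : ℝ)) * ∑ j, ∑ y, T C x1 j y))
      = ∑ x1, P1 x1 * ((1 / (N : ℝ)) *
          ∑ j, ∑ y, ∑ C : Fin N → X2, (∏ k, P2 (C k)) * T C x1 j y) := by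
    simp only [Finset.mul_sum]
    rw [Finset.sum_comm]
    refine Finset.sum_congr rfl fun x1 _ => ?_
    rw [Finset.sum_comm]
    refine Finset.sum_congr rfl fun j _ => ?_
    rw [Finset.sum_comm]
    refine Finset.sum_congr rfl fun y _ => Finset.sum_congr rfl fun C _ => ?_
    ring
  -- Step 4: expectation bound for fixed x1, j, y
  have step4 : ∀ (x1 : X1) (j : Fin N) (y : Y),
      (∑ C : Fin N → X2, (∏ k, P2 (C k)) * T C x1 j y)
        ≤ (N : ℝ) ^ s * (∑ x2, P2 x2 * W x1 x2 y ^ α) ^ (1 + s) := by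
    intro x1 j y
    set A : ℝ := ∑ x2, P2 x2 * W x1 x2 y ^ α with hA
    have hA0 : 0 ≤ A :=
      Finset.sum_nonneg fun x2 _ => mul_nonneg (hP20 _) (Real.rpow_nonneg (hW0 _ _ _) _)
    have hrw : ∀ C : Fin N → X2,
        (∑ j' ∈ Finset.univ.erase j, W x1 (C j') y ^ α)
          = ∑ k : {k : Fin N // k ≠ j}, W x1 (C k.1) y ^ α := by
      intro C
      exact Finset.sum_subtype (p := fun k => k ≠ j) _ (fun x => by simp) _
    have hfac : (∑ C : Fin N → X2, (∏ k, P2 (C k)) * T C x1 j y)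
        = A * ∑ g : {k : Fin N // k ≠ j} → X2, (∏ k, P2 (g k)) *
            (∑ k : {k : Fin N // k ≠ j}, W x1 (g k) y ^ α) ^ s := by
      simp only [hT, hrw]
      exact aux_factor_split P2 j (fun a => W x1 a y ^ α)
        (fun g => (∑ k : {k : Fin N // k ≠ j}, W x1 (g k) y ^ α) ^ s)
    rw [hfac]
    have hw1 : ∑ g : {k : Fin N // k ≠ j} → X2, ∏ k, P2 (g k) = 1 := by
      rw [← Fintype.prod_sum (fun (_ : {k : Fin N // k ≠ j}) a => P2 a)]
      simp [hP21]
    have hjen : ∑ g : {k : Fin N // k ≠ j} → X2, (∏ k, P2 (g k)) *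
          (∑ k : {k : Fin N // k ≠ j}, W x1 (g k) y ^ α) ^ s
        ≤ (∑ g : {k : Fin N // k ≠ j} → X2, (∏ k, P2 (g k)) *
            ∑ k : {k : Fin N // k ≠ j}, W x1 (g k) y ^ α) ^ s := by
      refine aux_jensen_rpow _ _ _ (fun g _ => Finset.prod_nonneg fun _ _ => hP20 _) hw1
        (fun g _ => Finset.sum_nonneg fun _ _ => Real.rpow_nonneg (hW0 _ _ _) _) hs0 hs1
    have hmeanval : ∑ g : {k : Fin N // k ≠ j} → X2, (∏ k, P2 (g k)) *
          ∑ k : {k : Fin N // k ≠ j}, W x1 (g k) y ^ α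
        = (Fintype.card {k : Fin N // k ≠ j} : ℝ) * A := by
      simp only [Finset.mul_sum]
      rw [Finset.sum_comm]
      rw [Finset.sum_congr rfl fun k _ =>
        aux_exp_single P2 hP21 (fun a => W x1 a y ^ α) k]
      simp [Finset.sum_const, nsmul_eq_mul, hA]
    have hcard : (Fintype.card {k : Fin N // k ≠ j} : ℝ) ≤ (N : ℝ) := by
      have := Fintype.card_subtype_le (fun k : Fin N => k ≠ j)
      rw [Fintype.card_fin] at this
      exact_mod_cast this
    have hmono : (∑ g : {k : Fin N // k ≠ j} → X2, (∏ k, P2 (g k)) *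
          ∑ k : {k : Fin N // k ≠ j}, W x1 (g k) y ^ α) ^ s ≤ ((N : ℝ) * A) ^ s := by
      apply Real.rpow_le_rpow _ _ hs0
      · rw [hmeanval]; positivity
      · rw [hmeanval]
        exact mul_le_mul_of_nonneg_right hcard hA0
    calc A * ∑ g : {k : Fin N // k ≠ j} → X2, (∏ k, P2 (g k)) *
            (∑ k : {k : Fin N // k ≠ j}, W x1 (g k) y ^ α) ^ s
        ≤ A * ((N : ℝ) * A) ^ s := by
          exact mul_le_mul_of_nonneg_left (hjen.trans hmono) hA0
      _ = (N : ℝ) ^ s * A ^ (1 + s) := by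
          rw [Real.mul_rpow (Nat.cast_nonneg N) hA0,
            Real.rpow_add' hA0 (by linarith : (1:ℝ) + s ≠ 0), Real.rpow_one]
          ring
  -- Combine
  refine (step2.trans_eq step3).trans ?_
  have hfinal : ∑ x1, P1 x1 * ((1 / (N : ℝ)) *
        ∑ j, ∑ y, ∑ C : Fin N → X2, (∏ k, P2 (C k)) * T C x1 j y)
      ≤ ∑ x1, P1 x1 * ((1 / (N : ℝ)) *
        ∑ j : Fin N, ∑ y, (N : ℝ) ^ s * (∑ x2, P2 x2 * W x1 x2 y ^ α) ^ (1 + s)) := by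
    gcongr with x1 _ j _ y _ <;>
      first
        | exact step4 _ _ _
        | exact hP10 _
        | positivity
  refine hfinal.trans_eq ?_
  rw [Finset.mul_sum]
  refine Finset.sum_congr rfl fun x1 _ => ?_
  rw [Finset.sum_const, Finset.card_univ, Fintype.card_fin, nsmul_eq_mul,
    ← Finset.mul_sum]
  have hNne : (N : ℝ) ≠ 0 := Nat.cast_ne_zero.2 hN.ne'
  field_simp
end

section
/- Let (I_n)_{n∈ℕ} be a family of sets (of 'codes of length n'), and for each n let κ_n : I_n → ℝ², e_n : I_n → ℝ, and τ_n : I_n → ℝ be arbitrary functions. Define A := { r ∈ ℝ² : there exists a choice c with c(n) ∈ I_n for every n such that κ_n(c(n)) → r, e_n(c(n)) → 0, and τ_n(c(n)) → 0 as n → ∞ }. Then A is a closed subset of ℝ². -/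
open Filter

/-- the set of achievable rate pairs (rates approachable by a sequence of codes
whose error and leakage tend to zero) is a closed subset of ℝ². -/
theorem achievable_region_isClosed (I : ℕ → Type*) (κ : ∀ n, I n → ℝ × ℝ)
    (e τ : ∀ n, I n → ℝ) :
    IsClosed {r : ℝ × ℝ | ∃ c : (n : ℕ) → I n,
      Tendsto (fun n => κ n (c n)) atTop (nhds r) ∧
      Tendsto (fun n => e n (c n)) atTop (nhds 0) ∧
      Tendsto (fun n => τ n (c n)) atTop (nhds 0)} := by
  classical
  set A := {r : ℝ × ℝ | ∃ c : (n : ℕ) → I n,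
      Tendsto (fun n => κ n (c n)) atTop (nhds r) ∧
      Tendsto (fun n => e n (c n)) atTop (nhds 0) ∧
      Tendsto (fun n => τ n (c n)) atTop (nhds 0)} with hA
  by_cases hI : Nonempty (∀ n, I n)
  · -- every I n is nonempty
    refine isClosed_of_closure_subset ?_
    intro r hr
    -- first establish the approximation property P r
    have hP : ∀ ε : ℝ, 0 < ε → ∃ N : ℕ, ∀ n ≥ N, ∃ i : I n,
        dist (κ n i) r ≤ ε ∧ |e n i| ≤ ε ∧ |τ n i| ≤ ε := by
      intro ε hε
      obtain ⟨a, haA, har⟩ := Metric.mem_closure_iff.mp hr (ε/2) (by linarith)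
      obtain ⟨c, hκ, he, hτ⟩ := haA
      have h1 : ∀ᶠ n in atTop, dist (κ n (c n)) a < ε/2 := by
        obtain ⟨N, hN⟩ := Metric.tendsto_atTop.mp hκ (ε/2) (by linarith)
        exact eventually_atTop.mpr ⟨N, hN⟩
      have h2 : ∀ᶠ n in atTop, |e n (c n)| < ε := by
        have := Metric.tendsto_atTop.mp he ε hε
        obtain ⟨N, hN⟩ := this
        exact eventually_atTop.mpr ⟨N, fun n hn => by simpa [Real.dist_eq] using hN n hn⟩
      have h3 : ∀ᶠ n in atTop, |τ n (c n)| < ε := by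
        obtain ⟨N, hN⟩ := Metric.tendsto_atTop.mp hτ ε hε
        exact eventually_atTop.mpr ⟨N, fun n hn => by simpa [Real.dist_eq] using hN n hn⟩
      obtain ⟨N, hN⟩ := eventually_atTop.mp ((h1.and h2).and h3)
      refine ⟨N, fun n hn => ⟨c n, ?_, le_of_lt ((hN n hn).1.2), le_of_lt (hN n hn).2⟩⟩
      calc dist (κ n (c n)) r ≤ dist (κ n (c n)) a + dist a r := dist_triangle _ _ _
        _ ≤ ε/2 + ε/2 := by
            have := (hN n hn).1.1
            rw [dist_comm] at har
            linarith
        _ = ε := by ring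
    -- choose N for ε = 1/(k+1)
    have hP' : ∀ k : ℕ, ∃ N : ℕ, ∀ n ≥ N, ∃ i : I n,
        dist (κ n i) r ≤ 1/(k+1) ∧ |e n i| ≤ 1/(k+1) ∧ |τ n i| ≤ 1/(k+1) :=
      fun k => hP (1/(k+1)) (by positivity)
    choose N hN using hP'
    -- monotone envelope of N
    set N' : ℕ → ℕ := fun k => (Finset.range (k+1)).sup N with hN'def
    have hNN' : ∀ k, N k ≤ N' k := fun k =>
      Finset.le_sup (Finset.mem_range.mpr (Nat.lt_succ_self k))
    have hN'mono : Monotone N' := fun a b hab =>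
      Finset.sup_mono (Finset.range_subset_range.mpr (by omega))
    set g : ℕ → ℕ := fun n => Nat.findGreatest (fun k => N' k ≤ n) n with hgdef
    have hg_spec : ∀ n, N' 0 ≤ n → N' (g n) ≤ n := by
      intro n hn
      exact Nat.findGreatest_spec (P := fun k => N' k ≤ n) (Nat.zero_le n) hn
    have hg_top : Tendsto g atTop atTop := by
      rw [tendsto_atTop]
      intro k
      filter_upwards [eventually_ge_atTop (max (N' k) k)] with n hn
      exact Nat.le_findGreatest (le_trans (le_max_right _ _) hn)
        (le_trans (le_max_left _ _) hn)
    -- define the diagonal sequence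
    have hchoice : ∀ n : ℕ, ∃ i : I n, N' (g n) ≤ n →
        dist (κ n i) r ≤ 1/(g n + 1) ∧ |e n i| ≤ 1/(g n + 1) ∧ |τ n i| ≤ 1/(g n + 1) := by
      intro n
      by_cases h : N' (g n) ≤ n
      · obtain ⟨i, hi⟩ := hN (g n) n (le_trans (hNN' _) h)
        exact ⟨i, fun _ => hi⟩
      · exact ⟨hI.some n, fun h' => absurd h' h⟩
    choose c hc using hchoice
    have hbound : ∀ᶠ n in atTop, dist (κ n (c n)) r ≤ 1/(g n + 1)
        ∧ |e n (c n)| ≤ 1/(g n + 1) ∧ |τ n (c n)| ≤ 1/(g n + 1) := by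
      filter_upwards [eventually_ge_atTop (N' 0)] with n hn
      exact hc n (hg_spec n hn)
    have hlim : Tendsto (fun n => 1/((g n : ℝ) + 1)) atTop (nhds 0) :=
      tendsto_one_div_add_atTop_nhds_zero_nat.comp hg_top
    refine ⟨c, ?_, ?_, ?_⟩
    · rw [tendsto_iff_dist_tendsto_zero]
      refine squeeze_zero' (by filter_upwards with n using dist_nonneg)
        (by filter_upwards [hbound] with n h using h.1) hlim
    · have : Tendsto (fun n => |e n (c n)|) atTop (nhds 0) :=
        squeeze_zero' (by filter_upwards with n using abs_nonneg _)
          (by filter_upwards [hbound] with n h using h.2.1) hlim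
      simpa using tendsto_zero_iff_abs_tendsto_zero _ |>.mpr this
    · have : Tendsto (fun n => |τ n (c n)|) atTop (nhds 0) :=
        squeeze_zero' (by filter_upwards with n using abs_nonneg _)
          (by filter_upwards [hbound] with n h using h.2.2) hlim
      simpa using tendsto_zero_iff_abs_tendsto_zero _ |>.mpr this
  · have : A = ∅ := by
      ext x
      simp only [hA, Set.mem_setOf_eq, Set.mem_empty_iff_false, iff_false]
      rintro ⟨c, -⟩
      exact hI ⟨c⟩
    rw [this]
    exact isClosed_empty
end

section
/- Let F be a finite field with q elements and a₁, b₁, a₂, b₂, a₃, b₃ nonzero elements of F. Let X₁, X₂, N₁, N₂, N₃ be mutually independent F-valued random variables with X₁ and X₂ uniformly distributed on F, and set Y₁ := a₁X₁ + b₁X₂ + N₁, Y₂ := a₂X₁ + b₂X₂ + N₂, Z := a₃X₁ + b₃X₂ + N₃. Then: I(Y₂; X₁ | X₂) = log q − H(N₂); I(Y₁; X₂ | X₁) = log q − H(N₁); I(Z; X₁) = 0; I(Z; X₂) = 0; and I(X₁, X₂; Z) = log q − H(N₃). -/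
open scoped BigOperators Classical

/-- Shannon entropy `H(P) = −∑ P log P` of a pmf on a finite set. -/
noncomputable def Hent {α : Type*} [Fintype α] (P : α → ℝ) : ℝ := ∑ a, Real.negMulLog (P a)

/-- Pushforward pmf of `P` along `f`. -/
noncomputable def pushf {Ω α : Type*} [Fintype Ω] (P : Ω → ℝ) (f : Ω → α) : α → ℝ :=
  fun a => ∑ ω, if f ω = a then P ω else 0

/-- Mutual information `I(X;Y) = H(X) + H(Y) − H(X,Y)` of a joint pmf. -/
noncomputable def miInfo {α β : Type*} [Fintype α] [Fintype β] (P : α × β → ℝ) : ℝ :=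
  Hent (fun a => ∑ b, P (a, b)) + Hent (fun b => ∑ a, P (a, b)) - Hent P

/-- Conditional mutual information `I(X;Y|Z) = H(X|Z) − H(X|Y,Z)
  = H(X,Z) + H(Y,Z) − H(Z) − H(X,Y,Z)` of a joint pmf on `α × β × γ`. -/
noncomputable def cmiInfo {α β γ : Type*} [Fintype α] [Fintype β] [Fintype γ]
    (P : α × β × γ → ℝ) : ℝ :=
  Hent (fun p : α × γ => ∑ b, P (p.1, b, p.2)) + Hent (fun p : β × γ => ∑ a, P (a, p.1, p.2))
    - Hent (fun c : γ => ∑ a, ∑ b, P (a, b, c)) - Hent P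

/-- A probability mass function on a finite set. -/
def IsPMF {α : Type*} [Fintype α] (P : α → ℝ) : Prop := (∀ a, 0 ≤ P a) ∧ ∑ a, P a = 1

/-- Joint pmf of `(X₁, X₂, N₁, N₂, N₃)`: `X₁, X₂` uniform on `F`, noises with pmfs
`p₁, p₂, p₃`, all mutually independent. -/
noncomputable def samplePMF {F : Type*} [Fintype F] (p1 p2 p3 : F → ℝ) :
    F × F × F × F × F → ℝ :=
  fun ω => (1 / (Fintype.card F : ℝ)) * (1 / (Fintype.card F : ℝ)) *
    p1 ω.2.2.1 * p2 ω.2.2.2.1 * p3 ω.2.2.2.2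

/-! ### Auxiliary lemmas -/

section Helpers

lemma AMIaux.shift_iff {G : Type*} [AddCommGroup G] (s y n : G) : (s + n = y) ↔ (n = y - s) := by
  rw [eq_sub_iff_add_eq, add_comm]

lemma AMIaux.sum_ite_const {α : Type*} [Fintype α] (C : Prop) [Decidable C] (f : α → ℝ) :
    ∑ a, (if C then f a else 0) = if C then (∑ a, f a) else 0 := by split_ifs <;> simp

variable {F : Type*} [Field F] [Fintype F]

lemma AMIaux.sum_sub_right (p : F → ℝ) (s : F) : ∑ x, p (x - s) = ∑ x, p x :=
  Fintype.sum_equiv (Equiv.subRight s) _ _ (fun _ => rfl)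

lemma AMIaux.sum_shiftA (p : F → ℝ) (a : F) (ha : a ≠ 0) (c d : F) :
    ∑ x, p (d - (c + a * x)) = ∑ x, p x :=
  Fintype.sum_equiv (((Equiv.mulLeft₀ a ha).trans (Equiv.addLeft c)).trans (Equiv.subLeft d))
    _ _ (fun _ => rfl)

lemma AMIaux.sum_shiftB (p : F → ℝ) (a : F) (ha : a ≠ 0) (c d : F) :
    ∑ x, p (d - (a * x + c)) = ∑ x, p x :=
  Fintype.sum_equiv (((Equiv.mulLeft₀ a ha).trans (Equiv.addRight c)).trans (Equiv.subLeft d))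
    _ _ (fun _ => rfl)

omit [Field F] in
lemma AMIaux.Hent_unif {α : Type*} [Fintype α] [Nonempty α] (k : ℝ)
    (hk : k = (Fintype.card α : ℝ)⁻¹) : Hent (fun _ : α => k) = Real.log (Fintype.card α) := by
  have hc : (0:ℝ) < (Fintype.card α : ℝ) := by positivity
  subst hk
  simp only [Hent, Finset.sum_const, Finset.card_univ, nsmul_eq_mul, Real.negMulLog,
    Real.log_inv]
  field_simp

lemma AMIaux.HentA {γ : Type*} [Fintype γ] (c : ℝ) (p : F → ℝ) (g : γ → F) :
    Hent (fun t : F × γ => c * p (t.1 - g t.2))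
      = (Fintype.card γ : ℝ) * ∑ n, Real.negMulLog (c * p n) := by
  simp only [Hent, Fintype.sum_prod_type]
  rw [Finset.sum_comm]
  have h1 : ∀ t2 : γ, ∑ y : F, Real.negMulLog (c * p (y - g t2))
      = ∑ n, Real.negMulLog (c * p n) :=
    fun t2 => Fintype.sum_equiv (Equiv.subRight (g t2)) _ _ (fun _ => rfl)
  rw [Finset.sum_congr rfl (fun t2 _ => h1 t2), Finset.sum_const, Finset.card_univ,
    nsmul_eq_mul]

lemma AMIaux.HentB {γ : Type*} [Fintype γ] (c : ℝ) (p : F → ℝ) (g : γ → F) :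
    Hent (fun t : γ × F => c * p (t.2 - g t.1))
      = (Fintype.card γ : ℝ) * ∑ n, Real.negMulLog (c * p n) := by
  simp only [Hent, Fintype.sum_prod_type]
  have h1 : ∀ t1 : γ, ∑ y : F, Real.negMulLog (c * p (y - g t1))
      = ∑ n, Real.negMulLog (c * p n) :=
    fun t1 => Fintype.sum_equiv (Equiv.subRight (g t1)) _ _ (fun _ => rfl)
  rw [Finset.sum_congr rfl (fun t1 _ => h1 t1), Finset.sum_const, Finset.card_univ,
    nsmul_eq_mul]

omit [Field F] in
lemma AMIaux.sum_negMulLog_mul (c : ℝ) (p : F → ℝ) (hp : ∑ n, p n = 1) :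
    ∑ n, Real.negMulLog (c * p n) = Real.negMulLog c + c * Hent p := by
  simp only [Real.negMulLog_mul, Finset.sum_add_distrib, ← Finset.sum_mul, ← Finset.mul_sum,
    hp, one_mul, Hent]

open AMIaux in
lemma AMIaux.cmi_eval (p : F → ℝ) (hp : ∑ n, p n = 1) (g : F → F → F)
    (hmid : ∀ y v : F, ∑ b, p (y - g b v) = 1) :
    cmiInfo (fun t : F × F × F => (1 / (Fintype.card F : ℝ)) * (1 / (Fintype.card F : ℝ)) *
        p (t.1 - g t.2.1 t.2.2))
      = Real.log (Fintype.card F) - Hent p := by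
  haveI : Nonempty F := ⟨0⟩
  set q : ℝ := (Fintype.card F : ℝ) with hqdef
  have hq : q ≠ 0 := Nat.cast_ne_zero.2 Fintype.card_ne_zero
  have e1 : (fun pr : F × F => ∑ b, (1 / q * (1 / q) * p (pr.1 - g b pr.2)))
      = fun _ : F × F => (q * q)⁻¹ := by
    funext pr
    rw [← Finset.mul_sum, hmid pr.1 pr.2, mul_one]
    field_simp
  have e2 : (fun pr : F × F => ∑ a, (1 / q * (1 / q) * p (a - g pr.1 pr.2)))
      = fun _ : F × F => (q * q)⁻¹ := by
    funext pr
    rw [← Finset.mul_sum, sum_sub_right, hp, mul_one]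
    field_simp
  have e3 : (fun v : F => ∑ a : F, ∑ b : F, (1 / q * (1 / q) * p (a - g b v)))
      = fun _ : F => q⁻¹ := by
    funext v
    have h : ∀ a : F, ∑ b : F, (1 / q * (1 / q) * p (a - g b v)) = 1 / q * (1 / q) := by
      intro a; rw [← Finset.mul_sum, hmid a v, mul_one]
    rw [Finset.sum_congr rfl (fun a _ => h a), Finset.sum_const, Finset.card_univ,
      nsmul_eq_mul]
    field_simp
    exact hqdef.symm
  have e4 : Hent (fun t : F × F × F => (1 / q * (1 / q) * p (t.1 - g t.2.1 t.2.2)))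
      = (Fintype.card (F × F) : ℝ) *
          (Real.negMulLog (1 / q * (1 / q)) + (1 / q * (1 / q)) * Hent p) := by
    rw [HentA (1 / q * (1 / q)) p (fun t2 : F × F => g t2.1 t2.2),
      sum_negMulLog_mul _ p hp]
  have hcard : (Fintype.card (F × F) : ℝ) = q * q := by
    rw [Fintype.card_prod]; push_cast [hqdef]; ring
  simp only [cmiInfo]
  rw [e1, e2, e3, e4,
    Hent_unif ((q*q)⁻¹) (by rw [hcard]),
    Hent_unif (q⁻¹) rfl, hcard]
  rw [Real.log_mul hq hq, Real.negMulLog,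
    show (1 / q * (1 / q) : ℝ) = (q * q)⁻¹ by field_simp,
    Real.log_inv, Real.log_mul hq hq, ← hqdef]
  field_simp
  ring

open AMIaux in
lemma AMIaux.mi_eval (p : F → ℝ) (hp : ∑ n, p n = 1) (g : F × F → F)
    (hmid : ∀ z : F, ∑ w : F × F, p (z - g w) = (Fintype.card F : ℝ)) :
    miInfo (fun t : (F × F) × F => (1 / (Fintype.card F : ℝ)) * (1 / (Fintype.card F : ℝ)) *
        p (t.2 - g t.1))
      = Real.log (Fintype.card F) - Hent p := by
  haveI : Nonempty F := ⟨0⟩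
  set q : ℝ := (Fintype.card F : ℝ) with hqdef
  have hq : q ≠ 0 := Nat.cast_ne_zero.2 Fintype.card_ne_zero
  have e1 : (fun w : F × F => ∑ z : F, (1 / q * (1 / q) * p (z - g w)))
      = fun _ : F × F => (q * q)⁻¹ := by
    funext w
    rw [← Finset.mul_sum, sum_sub_right, hp, mul_one]
    field_simp
  have e2 : (fun z : F => ∑ w : F × F, (1 / q * (1 / q) * p (z - g w)))
      = fun _ : F => q⁻¹ := by
    funext z
    rw [← Finset.mul_sum, hmid z]
    field_simp
  have e4 : Hent (fun t : (F × F) × F => (1 / q * (1 / q) * p (t.2 - g t.1)))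
      = (Fintype.card (F × F) : ℝ) *
          (Real.negMulLog (1 / q * (1 / q)) + (1 / q * (1 / q)) * Hent p) := by
    rw [HentB (1 / q * (1 / q)) p g, sum_negMulLog_mul _ p hp]
  have hcard : (Fintype.card (F × F) : ℝ) = q * q := by
    rw [Fintype.card_prod]; push_cast [hqdef]; ring
  simp only [miInfo]
  rw [e1, e2, e4, Hent_unif ((q*q)⁻¹) (by rw [hcard]), Hent_unif (q⁻¹) rfl, hcard]
  rw [Real.log_mul hq hq, Real.negMulLog,
    show (1 / q * (1 / q) : ℝ) = (q * q)⁻¹ by field_simp,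
    Real.log_inv, Real.log_mul hq hq, ← hqdef]
  field_simp
  ring

open AMIaux in
lemma AMIaux.mi_unif :
    miInfo (fun _ : F × F => (1 / (Fintype.card F : ℝ)) * (1 / (Fintype.card F : ℝ))) = 0 := by
  haveI : Nonempty F := ⟨0⟩
  set q : ℝ := (Fintype.card F : ℝ) with hqdef
  have hq : q ≠ 0 := Nat.cast_ne_zero.2 Fintype.card_ne_zero
  have hcard : (Fintype.card (F × F) : ℝ) = q * q := by
    rw [Fintype.card_prod]; push_cast [hqdef]; ring
  have e1 : (fun a : F => ∑ _b : F, (1 / q * (1 / q))) = fun _ : F => q⁻¹ := by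
    funext a
    rw [Finset.sum_const, Finset.card_univ, nsmul_eq_mul]
    field_simp
    exact hqdef.symm
  simp only [miInfo]
  rw [e1, Hent_unif (q⁻¹) rfl,
    Hent_unif (α := F × F) (1 / q * (1 / q)) (by rw [hcard]; field_simp),
    hcard, Real.log_mul hq hq, ← hqdef]
  ring

/-! ### Pushforward computations -/

variable (p1 p2 p3 : F → ℝ)

open AMIaux

lemma AMIaux.marg1 (h2 : ∑ a, p2 a = 1) (h3 : ∑ a, p3 a = 1) :
    pushf (samplePMF p1 p2 p3) (fun ω => ω.2.2.1) = p1 := by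
  haveI : Nonempty F := ⟨0⟩
  have hq : (Fintype.card F : ℝ) ≠ 0 := Nat.cast_ne_zero.2 Fintype.card_ne_zero
  funext n
  simp only [pushf, samplePMF, Fintype.sum_prod_type, sum_ite_const, Finset.sum_ite_eq',
    Finset.sum_ite_eq, Finset.mem_univ, if_true]
  simp only [← Finset.sum_mul, ← Finset.mul_sum, h2, h3, mul_one,
    Finset.sum_const, Finset.card_univ, nsmul_eq_mul]
  field_simp

lemma AMIaux.marg2 (h1 : ∑ a, p1 a = 1) (h3 : ∑ a, p3 a = 1) :
    pushf (samplePMF p1 p2 p3) (fun ω => ω.2.2.2.1) = p2 := by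
  haveI : Nonempty F := ⟨0⟩
  have hq : (Fintype.card F : ℝ) ≠ 0 := Nat.cast_ne_zero.2 Fintype.card_ne_zero
  funext n
  simp only [pushf, samplePMF, Fintype.sum_prod_type, sum_ite_const, Finset.sum_ite_eq',
    Finset.sum_ite_eq, Finset.mem_univ, if_true]
  simp only [← Finset.sum_mul, ← Finset.mul_sum, h1, h3, mul_one,
    Finset.sum_const, Finset.card_univ, nsmul_eq_mul]
  field_simp

lemma AMIaux.marg3 (h1 : ∑ a, p1 a = 1) (h2 : ∑ a, p2 a = 1) :
    pushf (samplePMF p1 p2 p3) (fun ω => ω.2.2.2.2) = p3 := by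
  haveI : Nonempty F := ⟨0⟩
  have hq : (Fintype.card F : ℝ) ≠ 0 := Nat.cast_ne_zero.2 Fintype.card_ne_zero
  funext n
  simp only [pushf, samplePMF, Fintype.sum_prod_type, sum_ite_const, Finset.sum_ite_eq',
    Finset.sum_ite_eq, Finset.mem_univ, if_true]
  simp only [← Finset.sum_mul, ← Finset.mul_sum, h1, h2, mul_one,
    Finset.sum_const, Finset.card_univ, nsmul_eq_mul]
  field_simp

lemma AMIaux.pfP1 (a2 b2 : F) (h1 : ∑ a, p1 a = 1) (h3 : ∑ a, p3 a = 1) :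
    pushf (samplePMF p1 p2 p3) (fun ω => (a2 * ω.1 + b2 * ω.2.1 + ω.2.2.2.1, ω.1, ω.2.1))
    = fun t : F × F × F => (1 / (Fintype.card F : ℝ)) * (1 / (Fintype.card F : ℝ)) *
        p2 (t.1 - (a2 * t.2.1 + b2 * t.2.2)) := by
  funext t
  obtain ⟨y, u, v⟩ := t
  simp only [pushf, samplePMF, Fintype.sum_prod_type, Prod.mk.injEq, shift_iff, ite_and,
    sum_ite_const, Finset.sum_ite_eq', Finset.sum_ite_eq, Finset.mem_univ, if_true]
  simp only [← Finset.sum_mul, ← Finset.mul_sum, h1, h3, mul_one]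

lemma AMIaux.pfP2 (a1 b1 : F) (h2 : ∑ a, p2 a = 1) (h3 : ∑ a, p3 a = 1) :
    pushf (samplePMF p1 p2 p3) (fun ω => (a1 * ω.1 + b1 * ω.2.1 + ω.2.2.1, ω.2.1, ω.1))
    = fun t : F × F × F => (1 / (Fintype.card F : ℝ)) * (1 / (Fintype.card F : ℝ)) *
        p1 (t.1 - (a1 * t.2.2 + b1 * t.2.1)) := by
  funext t
  obtain ⟨y, u, v⟩ := t
  simp only [pushf, samplePMF, Fintype.sum_prod_type, Prod.mk.injEq, shift_iff, ite_and,
    sum_ite_const, Finset.sum_ite_eq', Finset.sum_ite_eq, Finset.mem_univ, if_true]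
  simp only [← Finset.sum_mul, ← Finset.mul_sum, h2, h3, mul_one]

lemma AMIaux.pfP5 (a3 b3 : F) (h1 : ∑ a, p1 a = 1) (h2 : ∑ a, p2 a = 1) :
    pushf (samplePMF p1 p2 p3) (fun ω => ((ω.1, ω.2.1), a3 * ω.1 + b3 * ω.2.1 + ω.2.2.2.2))
    = fun t : (F × F) × F => (1 / (Fintype.card F : ℝ)) * (1 / (Fintype.card F : ℝ)) *
        p3 (t.2 - (a3 * t.1.1 + b3 * t.1.2)) := by
  funext t
  obtain ⟨⟨u, v⟩, z⟩ := t
  simp only [pushf, samplePMF, Fintype.sum_prod_type, Prod.mk.injEq, shift_iff, ite_and,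
    sum_ite_const, Finset.sum_ite_eq', Finset.sum_ite_eq, Finset.mem_univ, if_true]
  simp only [← Finset.sum_mul, ← Finset.mul_sum, h1, h2, mul_one]

lemma AMIaux.pfP3 (a3 b3 : F) (hb3 : b3 ≠ 0) (h1 : ∑ a, p1 a = 1) (h2 : ∑ a, p2 a = 1)
    (h3 : ∑ a, p3 a = 1) :
    pushf (samplePMF p1 p2 p3) (fun ω => (a3 * ω.1 + b3 * ω.2.1 + ω.2.2.2.2, ω.1))
    = fun _ : F × F => (1 / (Fintype.card F : ℝ)) * (1 / (Fintype.card F : ℝ)) := by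
  funext t
  obtain ⟨z, u⟩ := t
  simp only [pushf, samplePMF, Fintype.sum_prod_type, Prod.mk.injEq, shift_iff, ite_and,
    sum_ite_const, Finset.sum_ite_eq', Finset.sum_ite_eq, Finset.mem_univ, if_true]
  simp only [← Finset.sum_mul, ← Finset.mul_sum, h1, h2, mul_one]
  rw [sum_shiftA p3 b3 hb3 (a3 * u) z, h3, mul_one]

lemma AMIaux.pfP4 (a3 b3 : F) (ha3 : a3 ≠ 0) (h1 : ∑ a, p1 a = 1) (h2 : ∑ a, p2 a = 1)
    (h3 : ∑ a, p3 a = 1) :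
    pushf (samplePMF p1 p2 p3) (fun ω => (a3 * ω.1 + b3 * ω.2.1 + ω.2.2.2.2, ω.2.1))
    = fun _ : F × F => (1 / (Fintype.card F : ℝ)) * (1 / (Fintype.card F : ℝ)) := by
  funext t
  obtain ⟨z, v⟩ := t
  simp only [pushf, samplePMF, Fintype.sum_prod_type, Prod.mk.injEq, shift_iff, ite_and,
    sum_ite_const, Finset.sum_ite_eq', Finset.sum_ite_eq, Finset.mem_univ, if_true]
  simp only [← Finset.sum_mul, ← Finset.mul_sum, h1, h2, mul_one]
  rw [sum_shiftB p3 a3 ha3 (b3 * v) z, h3, mul_one]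

end Helpers

/-- mutual-information evaluations for the additive two-way wiretap channel
over a finite field with independent uniform inputs.  Here `ω = (x₁,x₂,n₁,n₂,n₃)`,
`Y₁ = a₁X₁+b₁X₂+N₁`, `Y₂ = a₂X₁+b₂X₂+N₂`, `Z = a₃X₁+b₃X₂+N₃`. -/
theorem additive_MI_evaluations {F : Type*} [Field F] [Fintype F]
    (a1 b1 a2 b2 a3 b3 : F)
    (ha1 : a1 ≠ 0) (hb1 : b1 ≠ 0) (ha2 : a2 ≠ 0) (hb2 : b2 ≠ 0) (ha3 : a3 ≠ 0) (hb3 : b3 ≠ 0)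
    (p1 p2 p3 : F → ℝ) (hp1 : IsPMF p1) (hp2 : IsPMF p2) (hp3 : IsPMF p3) :
    cmiInfo (pushf (samplePMF p1 p2 p3)
        (fun ω => (a2 * ω.1 + b2 * ω.2.1 + ω.2.2.2.1, ω.1, ω.2.1)))
      = Real.log (Fintype.card F) - Hent (pushf (samplePMF p1 p2 p3) (fun ω => ω.2.2.2.1)) ∧
    cmiInfo (pushf (samplePMF p1 p2 p3)
        (fun ω => (a1 * ω.1 + b1 * ω.2.1 + ω.2.2.1, ω.2.1, ω.1)))
      = Real.log (Fintype.card F) - Hent (pushf (samplePMF p1 p2 p3) (fun ω => ω.2.2.1)) ∧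
    miInfo (pushf (samplePMF p1 p2 p3)
        (fun ω => (a3 * ω.1 + b3 * ω.2.1 + ω.2.2.2.2, ω.1))) = 0 ∧
    miInfo (pushf (samplePMF p1 p2 p3)
        (fun ω => (a3 * ω.1 + b3 * ω.2.1 + ω.2.2.2.2, ω.2.1))) = 0 ∧
    miInfo (pushf (samplePMF p1 p2 p3)
        (fun ω => ((ω.1, ω.2.1), a3 * ω.1 + b3 * ω.2.1 + ω.2.2.2.2)))
      = Real.log (Fintype.card F) - Hent (pushf (samplePMF p1 p2 p3) (fun ω => ω.2.2.2.2)) := by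
  obtain ⟨-, h1⟩ := hp1
  obtain ⟨-, h2⟩ := hp2
  obtain ⟨-, h3⟩ := hp3
  refine ⟨?_, ?_, ?_, ?_, ?_⟩
  · rw [AMIaux.pfP1 p1 p2 p3 a2 b2 h1 h3, AMIaux.marg2 p1 p2 p3 h1 h3]
    exact AMIaux.cmi_eval p2 h2 (fun b v => a2 * b + b2 * v) (fun y v => by
      show ∑ b, p2 (y - (a2 * b + b2 * v)) = 1
      rw [AMIaux.sum_shiftB p2 a2 ha2 (b2 * v) y, h2])
  · rw [AMIaux.pfP2 p1 p2 p3 a1 b1 h2 h3, AMIaux.marg1 p1 p2 p3 h2 h3]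
    exact AMIaux.cmi_eval p1 h1 (fun b v => a1 * v + b1 * b) (fun y v => by
      show ∑ b, p1 (y - (a1 * v + b1 * b)) = 1
      rw [AMIaux.sum_shiftA p1 b1 hb1 (a1 * v) y, h1])
  · rw [AMIaux.pfP3 p1 p2 p3 a3 b3 hb3 h1 h2 h3]
    exact AMIaux.mi_unif
  · rw [AMIaux.pfP4 p1 p2 p3 a3 b3 ha3 h1 h2 h3]
    exact AMIaux.mi_unif
  · rw [AMIaux.pfP5 p1 p2 p3 a3 b3 h1 h2, AMIaux.marg3 p1 p2 p3 h1 h2]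
    exact AMIaux.mi_eval p3 h3 (fun w => a3 * w.1 + b3 * w.2) (fun z => by
      show ∑ w : F × F, p3 (z - (a3 * w.1 + b3 * w.2)) = (Fintype.card F : ℝ)
      have h : ∀ u : F, ∑ v : F, p3 (z - (a3 * u + b3 * v)) = 1 :=
        fun u => by rw [AMIaux.sum_shiftA p3 b3 hb3 (a3 * u) z, h3]
      rw [Fintype.sum_prod_type, Finset.sum_congr rfl (fun u _ => h u), Finset.sum_const,
        Finset.card_univ, nsmul_eq_mul, mul_one])
end

section
/- Let F be a finite field with q elements and a₁, b₁, a₂, b₂, a₃, b₃ nonzero elements of F. Let X₁, X₂, N₁, N₂, N₃ be mutually independent F-valued random variables with X₁ and X₂ uniformly distributed on F, and set Y₁ := a₁X₁ + b₁X₂ + N₁, Y₂ := a₂X₁ + b₂X₂ + N₂, Z := a₃X₁ + b₃X₂ + N₃. Then for every s ∈ (0,1]: (i) I↑_{1/(1+s)}(Y₂; X₁ | X₂) = log q − H_{1/(1+s)}(N₂) and I↑_{1/(1+s)}(Y₁; X₂ | X₁) = log q − H_{1/(1+s)}(N₁); (ii) I↓_{1+s}(Z; X₁) = 0 and I↓_{1+s}(Z;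 X₂) = 0; (iii) I↓_{1+s}(Z; (X₁,X₂)) = log q − H_{1+s}(N₃). -/
open scoped BigOperators Classical

/-- Rényi entropy `H_α(P) = (1/(1−α)) log ∑_x P(x)^α`. -/
noncomputable def renyiEnt {α' : Type*} [Fintype α'] (a : ℝ) (P : α' → ℝ) : ℝ :=
  (1 / (1 - a)) * Real.log (∑ x, P x ^ a)

/-- `exp(−s·I↑_{1/(1+s)}(Z;X|Y)) = ∑_y P_Y(y) ∑_z (∑_x P_{X|Y}(x|y) P_{Z|X,Y}(z|x,y)^{1/(1+s)})^{1+s}`,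
for a joint pmf `P` on `Z × X × Y`. -/
noncomputable def expNegCondRenyi {Z X Y : Type*} [Fintype Z] [Fintype X] [Fintype Y]
    (s : ℝ) (P : Z × X × Y → ℝ) : ℝ :=
  ∑ y, (∑ z, ∑ x, P (z, x, y)) *
    ∑ z, (∑ x, ((∑ z', P (z', x, y)) / (∑ z', ∑ x', P (z', x', y))) *
      (P (z, x, y) / (∑ z', P (z', x, y))) ^ (1 / (1 + s))) ^ (1 + s)

section AuxLemmas
variable {F : Type*} [Field F] [Fintype F]

lemma sum_affine (f : F → ℝ) (c a : F) (ha : a ≠ 0) :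
    ∑ x, f (c + a * x) = ∑ x, f x :=
  Fintype.sum_equiv ((Equiv.mulLeft₀ a ha).trans (Equiv.addLeft c)) _ _ (fun _ => rfl)

lemma sum_affine' (f : F → ℝ) (g : F → F) (c a : F) (ha : a ≠ 0)
    (hg : ∀ x, g x = c + a * x) :
    ∑ x, f (g x) = ∑ x, f x := by
  simp_rw [hg]; exact sum_affine f c a ha

variable (p1 p2 p3 : F → ℝ)

lemma sum_rpow_pos (p : F → ℝ) (hp : IsPMF p) (a : ℝ) :
    0 < ∑ x, p x ^ a := by
  obtain ⟨x, hx⟩ : ∃ x, p x ≠ 0 := by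
    by_contra h
    push_neg at h
    have := hp.2
    simp [h] at this
  have hx' : 0 < p x := lt_of_le_of_ne (hp.1 x) (Ne.symm hx)
  refine Finset.sum_pos' (fun y _ => ?_) ⟨x, Finset.mem_univ x, Real.rpow_pos_of_pos hx' a⟩
  exact Real.rpow_nonneg (hp.1 y) a

lemma hqne : (Fintype.card F : ℝ) ≠ 0 := Nat.cast_ne_zero.2 Fintype.card_ne_zero

-- noises
lemma auxN1 (hp2 : IsPMF p2) (hp3 : IsPMF p3) (a : F) : pushf (samplePMF p1 p2 p3) (fun ω => ω.2.2.1) a = p1 a := by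
  simp only [pushf, samplePMF, Fintype.sum_prod_type]
  simp only [Finset.sum_ite_irrel, Finset.sum_const_zero, Finset.sum_ite_eq',
    Finset.mem_univ, if_true]
  simp only [← Finset.sum_mul, ← Finset.mul_sum, hp2.2, hp3.2,
    Finset.sum_const, Finset.card_univ, nsmul_eq_mul]
  field_simp [hqne (F := F)]

lemma auxN2 (hp1 : IsPMF p1) (hp3 : IsPMF p3) (a : F) : pushf (samplePMF p1 p2 p3) (fun ω => ω.2.2.2.1) a = p2 a := by
  simp only [pushf, samplePMF, Fintype.sum_prod_type]
  simp only [Finset.sum_ite_irrel, Finset.sum_const_zero, Finset.sum_ite_eq',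
    Finset.mem_univ, if_true]
  simp only [← Finset.sum_mul, ← Finset.mul_sum, hp1.2, hp3.2,
    Finset.sum_const, Finset.card_univ, nsmul_eq_mul]
  field_simp [hqne (F := F)]

lemma auxN3 (hp1 : IsPMF p1) (hp2 : IsPMF p2) (a : F) : pushf (samplePMF p1 p2 p3) (fun ω => ω.2.2.2.2) a = p3 a := by
  simp only [pushf, samplePMF, Fintype.sum_prod_type]
  simp only [Finset.sum_ite_irrel, Finset.sum_const_zero, Finset.sum_ite_eq',
    Finset.mem_univ, if_true]
  simp only [← Finset.sum_mul, ← Finset.mul_sum, hp1.2, hp2.2,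
    Finset.sum_const, Finset.card_univ, nsmul_eq_mul]
  field_simp [hqne (F := F)]

-- inputs
lemma auxX1 (hp1 : IsPMF p1) (hp2 : IsPMF p2) (hp3 : IsPMF p3) (a : F) : pushf (samplePMF p1 p2 p3) (fun ω => ω.1) a
    = 1 / (Fintype.card F : ℝ) := by
  simp only [pushf, samplePMF, Fintype.sum_prod_type]
  simp only [Finset.sum_ite_irrel, Finset.sum_const_zero, Finset.sum_ite_eq',
    Finset.mem_univ, if_true]
  simp only [← Finset.sum_mul, ← Finset.mul_sum, hp1.2, hp2.2, hp3.2,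
    Finset.sum_const, Finset.card_univ, nsmul_eq_mul]
  field_simp [hqne (F := F)]

lemma auxX2 (hp1 : IsPMF p1) (hp2 : IsPMF p2) (hp3 : IsPMF p3) (a : F) : pushf (samplePMF p1 p2 p3) (fun ω => ω.2.1) a
    = 1 / (Fintype.card F : ℝ) := by
  simp only [pushf, samplePMF, Fintype.sum_prod_type]
  simp only [Finset.sum_ite_irrel, Finset.sum_const_zero, Finset.sum_ite_eq',
    Finset.mem_univ, if_true]
  simp only [← Finset.sum_mul, ← Finset.mul_sum, hp1.2, hp2.2, hp3.2,
    Finset.sum_const, Finset.card_univ, nsmul_eq_mul]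
  field_simp [hqne (F := F)]

lemma auxX12 (hp1 : IsPMF p1) (hp2 : IsPMF p2) (hp3 : IsPMF p3) (a : F × F) : pushf (samplePMF p1 p2 p3) (fun ω => (ω.1, ω.2.1)) a
    = 1 / (Fintype.card F : ℝ) * (1 / (Fintype.card F : ℝ)) := by
  obtain ⟨x1, x2⟩ := a
  simp only [pushf, samplePMF, Fintype.sum_prod_type, Prod.mk.injEq, ite_and]
  simp only [Finset.sum_ite_irrel, Finset.sum_const_zero, Finset.sum_ite_eq',
    Finset.mem_univ, if_true]
  simp only [← Finset.sum_mul, ← Finset.mul_sum, hp1.2, hp2.2, hp3.2,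
    Finset.sum_const, Finset.card_univ, nsmul_eq_mul]
  ring

lemma auxZX12 (hp1 : IsPMF p1) (hp2 : IsPMF p2) (a3 b3 : F) (z x1 x2 : F) :
    pushf (samplePMF p1 p2 p3)
      (fun ω => (a3 * ω.1 + b3 * ω.2.1 + ω.2.2.2.2, (ω.1, ω.2.1))) (z, (x1, x2))
      = (1 / (Fintype.card F : ℝ)) * (1 / (Fintype.card F : ℝ)) * p3 (z - a3*x1 - b3*x2) := by
  simp only [pushf, samplePMF, Fintype.sum_prod_type, Prod.mk.injEq]
  have hcond : ∀ x1' x2' n3 : F,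
      ((a3*x1'+b3*x2'+n3 = z ∧ x1' = x1 ∧ x2' = x2)) ↔
      (x1' = x1 ∧ x2' = x2 ∧ n3 = z - a3*x1 - b3*x2) := by
    intro x1' x2' n3
    constructor
    · rintro ⟨h, rfl, rfl⟩; exact ⟨rfl, rfl, by linear_combination h⟩
    · rintro ⟨rfl, rfl, rfl⟩; exact ⟨by ring, rfl, rfl⟩
  simp only [hcond, ite_and]
  simp only [Finset.sum_ite_irrel, Finset.sum_const_zero, Finset.sum_ite_eq',
    Finset.mem_univ, if_true]
  simp only [← Finset.sum_mul, ← Finset.mul_sum, hp1.2, hp2.2]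
  ring

lemma auxZ (hp1 : IsPMF p1) (hp2 : IsPMF p2) (hp3 : IsPMF p3) (a3 b3 : F) (hb3 : b3 ≠ 0)
    (z : F) :
    pushf (samplePMF p1 p2 p3)
      (fun ω => a3 * ω.1 + b3 * ω.2.1 + ω.2.2.2.2) z = 1 / (Fintype.card F : ℝ) := by
  simp only [pushf, samplePMF, Fintype.sum_prod_type]
  have hcond : ∀ x1' x2' n3 : F,
      (a3*x1'+b3*x2'+n3 = z) ↔ (n3 = z - a3*x1' - b3*x2') := by
    intro x1' x2' n3
    constructor
    · intro h; linear_combination h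
    · rintro rfl; ring
  simp only [hcond]
  simp only [Finset.sum_ite_irrel, Finset.sum_const_zero, Finset.sum_ite_eq',
    Finset.mem_univ, if_true]
  simp only [← Finset.sum_mul, ← Finset.mul_sum, hp1.2, hp2.2]
  have h1 : ∀ x1' : F, (∑ x2', p3 (z - a3*x1' - b3*x2')) = 1 := by
    intro x1'
    have := sum_affine' p3 (fun x2' => z - a3*x1' - b3*x2') (z - a3*x1') (-b3)
      (neg_ne_zero.2 hb3) (fun x => by ring)
    simpa [hp3.2] using this
  simp only [← Finset.mul_sum, h1, Finset.sum_const, Finset.card_univ, nsmul_eq_mul]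
  field_simp [hqne (F := F)]

lemma auxZX1 (hp1 : IsPMF p1) (hp2 : IsPMF p2) (hp3 : IsPMF p3) (a3 b3 : F) (hb3 : b3 ≠ 0)
    (z x1 : F) :
    pushf (samplePMF p1 p2 p3)
      (fun ω => (a3 * ω.1 + b3 * ω.2.1 + ω.2.2.2.2, ω.1)) (z, x1)
      = (1 / (Fintype.card F : ℝ)) * (1 / (Fintype.card F : ℝ)) := by
  simp only [pushf, samplePMF, Fintype.sum_prod_type, Prod.mk.injEq]
  have hcond : ∀ x1' x2' n3 : F,
      ((a3*x1'+b3*x2'+n3 = z ∧ x1' = x1)) ↔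
      (x1' = x1 ∧ n3 = z - a3*x1 - b3*x2') := by
    intro x1' x2' n3
    constructor
    · rintro ⟨h, rfl⟩; exact ⟨rfl, by linear_combination h⟩
    · rintro ⟨rfl, rfl⟩; exact ⟨by ring, rfl⟩
  simp only [hcond, ite_and]
  simp only [Finset.sum_ite_irrel, Finset.sum_const_zero, Finset.sum_ite_eq',
    Finset.mem_univ, if_true]
  simp only [← Finset.sum_mul, ← Finset.mul_sum, hp1.2, hp2.2]
  have h1 : (∑ x2', p3 (z - a3*x1 - b3*x2')) = 1 := by
    have := sum_affine' p3 (fun x2' => z - a3*x1 - b3*x2') (z - a3*x1) (-b3)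
      (neg_ne_zero.2 hb3) (fun x => by ring)
    simpa [hp3.2] using this
  simp only [← Finset.mul_sum, h1]
  ring

lemma auxZX2 (hp1 : IsPMF p1) (hp2 : IsPMF p2) (hp3 : IsPMF p3) (a3 b3 : F) (ha3 : a3 ≠ 0)
    (z x2 : F) :
    pushf (samplePMF p1 p2 p3)
      (fun ω => (a3 * ω.1 + b3 * ω.2.1 + ω.2.2.2.2, ω.2.1)) (z, x2)
      = (1 / (Fintype.card F : ℝ)) * (1 / (Fintype.card F : ℝ)) := by
  simp only [pushf, samplePMF, Fintype.sum_prod_type, Prod.mk.injEq]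
  have hcond : ∀ x1' x2' n3 : F,
      ((a3*x1'+b3*x2'+n3 = z ∧ x2' = x2)) ↔
      (x2' = x2 ∧ n3 = z - a3*x1' - b3*x2) := by
    intro x1' x2' n3
    constructor
    · rintro ⟨h, rfl⟩; exact ⟨rfl, by linear_combination h⟩
    · rintro ⟨rfl, rfl⟩; exact ⟨by ring, rfl⟩
  simp only [hcond, ite_and]
  simp only [Finset.sum_ite_irrel, Finset.sum_const_zero, Finset.sum_ite_eq',
    Finset.mem_univ, if_true]
  simp only [← Finset.sum_mul, ← Finset.mul_sum, hp1.2, hp2.2]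
  have h1 : (∑ x1', p3 (z - a3*x1' - b3*x2)) = 1 := by
    have := sum_affine' p3 (fun x1' => z - a3*x1' - b3*x2) (z - b3*x2) (-a3)
      (neg_ne_zero.2 ha3) (fun x => by ring)
    simpa [hp3.2] using this
  simp only [← Finset.sum_mul, ← Finset.mul_sum, h1]
  ring

lemma auxJ2 (hp1 : IsPMF p1) (hp3 : IsPMF p3) (a2 b2 : F) (z x y : F) :
    pushf (samplePMF p1 p2 p3)
      (fun ω => (a2 * ω.1 + b2 * ω.2.1 + ω.2.2.2.1, ω.1, ω.2.1)) (z, x, y)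
      = (1 / (Fintype.card F : ℝ)) * (1 / (Fintype.card F : ℝ)) * p2 (z - a2*x - b2*y) := by
  simp only [pushf, samplePMF, Fintype.sum_prod_type, Prod.mk.injEq]
  have hcond : ∀ x1' x2' n2 : F,
      ((a2*x1'+b2*x2'+n2 = z ∧ x1' = x ∧ x2' = y)) ↔
      (x1' = x ∧ x2' = y ∧ n2 = z - a2*x - b2*y) := by
    intro x1' x2' n2
    constructor
    · rintro ⟨h, rfl, rfl⟩; exact ⟨rfl, rfl, by linear_combination h⟩
    · rintro ⟨rfl, rfl, rfl⟩; exact ⟨by ring, rfl, rfl⟩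
  simp only [hcond, ite_and]
  simp only [Finset.sum_ite_irrel, Finset.sum_const_zero, Finset.sum_ite_eq',
    Finset.mem_univ, if_true]
  simp only [← Finset.sum_mul, ← Finset.mul_sum, hp1.2, hp3.2]
  ring

lemma auxJ1 (hp2 : IsPMF p2) (hp3 : IsPMF p3) (a1 b1 : F) (z x y : F) :
    pushf (samplePMF p1 p2 p3)
      (fun ω => (a1 * ω.1 + b1 * ω.2.1 + ω.2.2.1, ω.2.1, ω.1)) (z, x, y)
      = (1 / (Fintype.card F : ℝ)) * (1 / (Fintype.card F : ℝ)) * p1 (z - a1*y - b1*x) := by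
  simp only [pushf, samplePMF, Fintype.sum_prod_type, Prod.mk.injEq]
  have hcond : ∀ x1' x2' n1 : F,
      ((a1*x1'+b1*x2'+n1 = z ∧ x2' = x ∧ x1' = y)) ↔
      (x1' = y ∧ x2' = x ∧ n1 = z - a1*y - b1*x) := by
    intro x1' x2' n1
    constructor
    · rintro ⟨h, rfl, rfl⟩; exact ⟨rfl, rfl, by linear_combination h⟩
    · rintro ⟨rfl, rfl, rfl⟩; exact ⟨by ring, rfl, rfl⟩
  simp only [hcond, ite_and]
  simp only [Finset.sum_ite_irrel, Finset.sum_const_zero, Finset.sum_ite_eq',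
    Finset.mem_univ, if_true]
  simp only [← Finset.sum_mul, ← Finset.mul_sum, hp2.2, hp3.2]
  ring

end AuxLemmas

/-- Rényi-information evaluations for the additive two-way wiretap channel
over a finite field with independent uniform inputs.  Here `ω = (x₁,x₂,n₁,n₂,n₃)`,
`Y₁ = a₁X₁+b₁X₂+N₁`, `Y₂ = a₂X₁+b₂X₂+N₂`, `Z = a₃X₁+b₃X₂+N₃`;
`I↑_{1/(1+s)}` is determined through `exp(−s·I↑) = expNegCondRenyi`, and
`I↓_{1+s}(Z;X) = D_{1+s}(P_{ZX}‖P_Z×P_X)`. -/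
theorem additive_Renyi_evaluations {F : Type*} [Field F] [Fintype F]
    (a1 b1 a2 b2 a3 b3 : F)
    (ha1 : a1 ≠ 0) (hb1 : b1 ≠ 0) (ha2 : a2 ≠ 0) (hb2 : b2 ≠ 0) (ha3 : a3 ≠ 0) (hb3 : b3 ≠ 0)
    (p1 p2 p3 : F → ℝ) (hp1 : IsPMF p1) (hp2 : IsPMF p2) (hp3 : IsPMF p3)
    (s : ℝ) (hs : s ∈ Set.Ioc (0 : ℝ) 1) :
    -- (i)  I↑_{1/(1+s)}(Y₂;X₁|X₂) = log q − H_{1/(1+s)}(N₂)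
    (-(1 / s)) * Real.log (expNegCondRenyi s (pushf (samplePMF p1 p2 p3)
        (fun ω => (a2 * ω.1 + b2 * ω.2.1 + ω.2.2.2.1, ω.1, ω.2.1))))
      = Real.log (Fintype.card F)
        - renyiEnt (1 / (1 + s)) (pushf (samplePMF p1 p2 p3) (fun ω => ω.2.2.2.1)) ∧
    -- (i)  I↑_{1/(1+s)}(Y₁;X₂|X₁) = log q − H_{1/(1+s)}(N₁)
    (-(1 / s)) * Real.log (expNegCondRenyi s (pushf (samplePMF p1 p2 p3)
        (fun ω => (a1 * ω.1 + b1 * ω.2.1 + ω.2.2.1, ω.2.1, ω.1))))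
      = Real.log (Fintype.card F)
        - renyiEnt (1 / (1 + s)) (pushf (samplePMF p1 p2 p3) (fun ω => ω.2.2.1)) ∧
    -- (ii)  I↓_{1+s}(Z;X₁) = 0
    renyiD s (pushf (samplePMF p1 p2 p3)
        (fun ω => (a3 * ω.1 + b3 * ω.2.1 + ω.2.2.2.2, ω.1)))
      (fun p : F × F =>
        pushf (samplePMF p1 p2 p3) (fun ω => a3 * ω.1 + b3 * ω.2.1 + ω.2.2.2.2) p.1 *
        pushf (samplePMF p1 p2 p3) (fun ω => ω.1) p.2) = 0 ∧
    -- (ii)  I↓_{1+s}(Z;X₂) = 0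
    renyiD s (pushf (samplePMF p1 p2 p3)
        (fun ω => (a3 * ω.1 + b3 * ω.2.1 + ω.2.2.2.2, ω.2.1)))
      (fun p : F × F =>
        pushf (samplePMF p1 p2 p3) (fun ω => a3 * ω.1 + b3 * ω.2.1 + ω.2.2.2.2) p.1 *
        pushf (samplePMF p1 p2 p3) (fun ω => ω.2.1) p.2) = 0 ∧
    -- (iii)  I↓_{1+s}(Z;(X₁,X₂)) = log q − H_{1+s}(N₃)
    renyiD s (pushf (samplePMF p1 p2 p3)
        (fun ω => (a3 * ω.1 + b3 * ω.2.1 + ω.2.2.2.2, (ω.1, ω.2.1))))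
      (fun p : F × (F × F) =>
        pushf (samplePMF p1 p2 p3) (fun ω => a3 * ω.1 + b3 * ω.2.1 + ω.2.2.2.2) p.1 *
        pushf (samplePMF p1 p2 p3) (fun ω => (ω.1, ω.2.1)) p.2)
      = Real.log (Fintype.card F)
        - renyiEnt (1 + s) (pushf (samplePMF p1 p2 p3) (fun ω => ω.2.2.2.2)) := by
  
  obtain ⟨hs0, hs1⟩ := hs
  have hs0' : s ≠ 0 := ne_of_gt hs0
  have h1s : (0:ℝ) < 1 + s := by linarith
  have hq0 : (0:ℝ) < (Fintype.card F : ℝ) := Nat.cast_pos.2 Fintype.card_pos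
  have hqne : (Fintype.card F : ℝ) ≠ 0 := ne_of_gt hq0
  set q : ℝ := (Fintype.card F : ℝ) with hqdef
  have hu0 : (0:ℝ) < 1 / q * (1 / q) := by positivity
  refine ⟨?_, ?_, ?_, ?_, ?_⟩
  · -- (i) first: Y₂ vs X₁ given X₂
    rw [expNegCondRenyi, renyiEnt]
    simp only [auxJ2 p1 p2 p3 hp1 hp3 a2 b2, auxN2 p1 p2 p3 hp1 hp3]
    have hB : ∀ y : F, (∑ z, ∑ x, (1/q * (1/q) * p2 (z - a2*x - b2*y))) = 1/q := by
      intro y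
      have inner : ∀ z : F, (∑ x, (1/q * (1/q) * p2 (z - a2*x - b2*y))) = 1/q * (1/q) := by
        intro z
        rw [← Finset.mul_sum]
        have := sum_affine' p2 (fun x => z - a2*x - b2*y) (z - b2*y) (-a2)
          (neg_ne_zero.2 ha2) (fun x => by ring)
        simp only [this, hp2.2, mul_one]
      simp only [inner, Finset.sum_const, Finset.card_univ, nsmul_eq_mul, ← hqdef]
      field_simp
    have hA : ∀ x y : F, (∑ z, (1/q * (1/q) * p2 (z - a2*x - b2*y))) = 1/q * (1/q) := by
      intro x y
      rw [← Finset.mul_sum]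
      have := sum_affine' p2 (fun z => z - a2*x - b2*y) (-(a2*x) - b2*y) (1)
        one_ne_zero (fun z => by ring)
      simp only [this, hp2.2, mul_one]
    rw [← hqdef]
    simp only [hB, hA]
    have hd1 : ((1/q * (1/q)) / (1/q) : ℝ) = 1/q := by
      rw [mul_div_assoc, div_self (one_div_ne_zero hqne), mul_one]
    have hd2 : ∀ t : ℝ, ((1/q * (1/q) * t) / (1/q * (1/q))) = t := fun t =>
      mul_div_cancel_left₀ t (by positivity)
    simp only [hd1, hd2]
    simp only [← Finset.mul_sum]
    have hX : ∀ z y : F, (∑ x, p2 (z - a2*x - b2*y) ^ (1/(1+s)))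
        = ∑ x, p2 x ^ (1/(1+s)) := by
      intro z y
      have := sum_affine' (fun n => p2 n ^ (1/(1+s))) (fun x => z - a2*x - b2*y) (z - b2*y)
        (-a2) (neg_ne_zero.2 ha2) (fun x => by ring)
      simpa using this
    simp only [hX, Finset.sum_const, Finset.card_univ, nsmul_eq_mul, ← hqdef]
    set S2 : ℝ := ∑ x, p2 x ^ (1/(1+s)) with hS2
    have hS2pos : 0 < S2 := sum_rpow_pos p2 hp2 _
    rw [show 1/q * (q * (q * (1/q * S2) ^ (1+s))) = q * (1/q * S2) ^ (1+s) by
      field_simp]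
    rw [Real.log_mul hqne (ne_of_gt (Real.rpow_pos_of_pos (by positivity) _)),
      Real.log_rpow (by positivity),
      Real.log_mul (one_div_ne_zero hqne) (ne_of_gt hS2pos), one_div q, Real.log_inv]
    field_simp
    linear_combination (Real.log S2 + s * Real.log S2) * mul_inv_cancel₀ hs0'
  · -- (i) second: Y₁ vs X₂ given X₁
    rw [expNegCondRenyi, renyiEnt]
    simp only [auxJ1 p1 p2 p3 hp2 hp3 a1 b1, auxN1 p1 p2 p3 hp2 hp3]
    have hB : ∀ y : F, (∑ z, ∑ x, (1/q * (1/q) * p1 (z - a1*y - b1*x))) = 1/q := by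
      intro y
      have inner : ∀ z : F, (∑ x, (1/q * (1/q) * p1 (z - a1*y - b1*x))) = 1/q * (1/q) := by
        intro z
        rw [← Finset.mul_sum]
        have := sum_affine' p1 (fun x => z - a1*y - b1*x) (z - a1*y) (-b1)
          (neg_ne_zero.2 hb1) (fun x => by ring)
        simp only [this, hp1.2, mul_one]
      simp only [inner, Finset.sum_const, Finset.card_univ, nsmul_eq_mul, ← hqdef]
      field_simp
    have hA : ∀ x y : F, (∑ z, (1/q * (1/q) * p1 (z - a1*y - b1*x))) = 1/q * (1/q) := by
      intro x y
      rw [← Finset.mul_sum]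
      have := sum_affine' p1 (fun z => z - a1*y - b1*x) (-(a1*y) - b1*x) (1)
        one_ne_zero (fun z => by ring)
      simp only [this, hp1.2, mul_one]
    rw [← hqdef]
    simp only [hB, hA]
    have hd1 : ((1/q * (1/q)) / (1/q) : ℝ) = 1/q := by
      rw [mul_div_assoc, div_self (one_div_ne_zero hqne), mul_one]
    have hd2 : ∀ t : ℝ, ((1/q * (1/q) * t) / (1/q * (1/q))) = t := fun t =>
      mul_div_cancel_left₀ t (by positivity)
    simp only [hd1, hd2]
    simp only [← Finset.mul_sum]
    have hX : ∀ z y : F, (∑ x, p1 (z - a1*y - b1*x) ^ (1/(1+s)))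
        = ∑ x, p1 x ^ (1/(1+s)) := by
      intro z y
      have := sum_affine' (fun n => p1 n ^ (1/(1+s))) (fun x => z - a1*y - b1*x) (z - a1*y)
        (-b1) (neg_ne_zero.2 hb1) (fun x => by ring)
      simpa using this
    simp only [hX, Finset.sum_const, Finset.card_univ, nsmul_eq_mul, ← hqdef]
    set S1 : ℝ := ∑ x, p1 x ^ (1/(1+s)) with hS1
    have hS1pos : 0 < S1 := sum_rpow_pos p1 hp1 _
    rw [show 1/q * (q * (q * (1/q * S1) ^ (1+s))) = q * (1/q * S1) ^ (1+s) by
      field_simp]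
    rw [Real.log_mul hqne (ne_of_gt (Real.rpow_pos_of_pos (by positivity) _)),
      Real.log_rpow (by positivity),
      Real.log_mul (one_div_ne_zero hqne) (ne_of_gt hS1pos), one_div q, Real.log_inv]
    field_simp
    linear_combination (Real.log S1 + s * Real.log S1) * mul_inv_cancel₀ hs0'
  · -- (ii) Z vs X₁
    rw [renyiD, Fintype.sum_prod_type]
    simp only [auxZX1 p1 p2 p3 hp1 hp2 hp3 a3 b3 hb3, auxZ p1 p2 p3 hp1 hp2 hp3 a3 b3 hb3,
      auxX1 p1 p2 p3 hp1 hp2 hp3]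
    have key : (1/q * (1/q)) ^ (1+s) * (1/q * (1/q)) ^ (-s) = 1/q * (1/q) := by
      rw [← Real.rpow_add hu0]
      norm_num
    simp only [key, Finset.sum_const, Finset.card_univ, nsmul_eq_mul, ← hqdef]
    rw [show (q * (q * (1/q * (1/q)))) = 1 by field_simp]
    simp
  · -- (ii) Z vs X₂
    rw [renyiD, Fintype.sum_prod_type]
    simp only [auxZX2 p1 p2 p3 hp1 hp2 hp3 a3 b3 ha3, auxZ p1 p2 p3 hp1 hp2 hp3 a3 b3 hb3,
      auxX2 p1 p2 p3 hp1 hp2 hp3]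
    have key : (1/q * (1/q)) ^ (1+s) * (1/q * (1/q)) ^ (-s) = 1/q * (1/q) := by
      rw [← Real.rpow_add hu0]
      norm_num
    simp only [key, Finset.sum_const, Finset.card_univ, nsmul_eq_mul, ← hqdef]
    rw [show (q * (q * (1/q * (1/q)))) = 1 by field_simp]
    simp
  · -- (iii) Z vs (X₁, X₂)
    set S3 : ℝ := ∑ x, p3 x ^ (1+s) with hS3
    have hS3pos : 0 < S3 := sum_rpow_pos p3 hp3 (1+s)
    rw [renyiD, renyiEnt]
    simp only [Fintype.sum_prod_type]
    simp only [auxZX12 p1 p2 p3 hp1 hp2 a3 b3, auxZ p1 p2 p3 hp1 hp2 hp3 a3 b3 hb3,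
      auxX12 p1 p2 p3 hp1 hp2 hp3, auxN3 p1 p2 p3 hp1 hp2]
    have key : ∀ z x1 x2 : F,
        ((1/q) * (1/q) * p3 (z - a3*x1 - b3*x2)) ^ (1+s) * (1/q * (1/q * (1/q))) ^ (-s)
        = ((1/q * (1/q)) ^ (1+s) * (1/q * (1/q * (1/q))) ^ (-s))
          * p3 (z - a3*x1 - b3*x2) ^ (1+s) := by
      intro z x1 x2
      rw [Real.mul_rpow (by positivity) (hp3.1 _)]
      ring
    rw [← hqdef]
    simp only [key]
    set C : ℝ := (1/q * (1/q)) ^ (1+s) * (1/q * (1/q * (1/q))) ^ (-s) with hC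
    have hshift : ∀ z x1 : F, (∑ x2, p3 (z - a3*x1 - b3*x2) ^ (1+s)) = S3 := by
      intro z x1
      have := sum_affine' (fun n => p3 n ^ (1+s)) (fun x2 => z - a3*x1 - b3*x2)
        (z - a3*x1) (-b3) (neg_ne_zero.2 hb3) (fun x => by ring)
      simpa [hS3] using this
    simp only [← Finset.mul_sum, hshift, Finset.sum_const, Finset.card_univ, nsmul_eq_mul]
    have e1 : (1/q * (1/q) : ℝ) = q ^ (-2:ℝ) := by
      rw [show ((-2:ℝ)) = (-(2:ℕ):ℝ) by norm_num, Real.rpow_neg hq0.le, Real.rpow_natCast]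
      field_simp
    have e2 : (1/q * (1/q * (1/q)) : ℝ) = q ^ (-3:ℝ) := by
      rw [show ((-3:ℝ)) = (-(3:ℕ):ℝ) by norm_num, Real.rpow_neg hq0.le, Real.rpow_natCast]
      field_simp
    have hCval : C * (q * (q * S3)) = q ^ s * S3 := by
      rw [hC, e2, e1, ← Real.rpow_mul hq0.le, ← Real.rpow_mul hq0.le]
      rw [show q ^ ((-2)*(1+s)) * q ^ ((-3)*(-s)) * (q * (q * S3))
          = (q^(2:ℕ) * (q ^ ((-2)*(1+s)) * q ^ ((-3)*(-s)))) * S3 by ring]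
      rw [← Real.rpow_natCast q 2, ← Real.rpow_add hq0, ← Real.rpow_add hq0]
      rw [show (((2:ℕ):ℝ) + ((-2)*(1+s) + (-3)*(-s))) = s by push_cast; ring]
    rw [← hqdef, hCval, Real.log_mul (by positivity) (ne_of_gt hS3pos), Real.log_rpow hq0]
    have h1s' : (1 - (1+s)) = -s := by ring
    rw [h1s', ← hS3]
    rw [div_neg, neg_mul, sub_neg_eq_add, mul_add, ← mul_assoc, one_div,
      inv_mul_cancel₀ hs0', one_mul]
end
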